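/- arXiv:1304.7181 — 10 statements merged into one kernel-verified Lean document; each statement's English description precedes it below -/
import Mathlib

section
/- Let k ≥ 1 be an integer and let a : ℕ → ℂ be finitely supported. Then |∑_{n=1}^∞ ((n+1)^{2k} − n^{2k})·Im(conj(a_n)·a_{n+1})| ≤ (2^{2k} − 1)·∑_{n=1}^∞ n^{2k}·|a_n|². -/
/-!
With weights `ν n = n ^ (2k)`, for `n ≥ 1` the increment satisfies
`0 ≤ ν (n+1) - ν n ≤ (2^(2k) - 1) ν n` because `(n+1)^(2k) ≤ (2n)^(2k)`, while
`|Im (conj z * w)| ≤ |z| |w| ≤ (|z|² + |w|²)/2`. Since `ν n ≤ ν (n+1)`, the `n`-th term is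
therefore at most `(2^(2k) - 1)/2 · (ν n |a n|² + ν (n+1) |a (n+1)|²)`; summing, the shifted
sum of the nonnegative terms `ν n |a n|²` is at most the unshifted one.
-/

open Complex

lemma add_one_pow_sub_pow_le {x : ℝ} (hx : 1 ≤ x) (m : ℕ) :
    (x + 1) ^ m - x ^ m ≤ (2 ^ m - 1) * x ^ m := by
  have : (x + 1) ^ m ≤ (2 * x) ^ m := pow_le_pow_left₀ (by linarith) (by linarith) m
  rw [mul_pow] at this
  linarith

lemma abs_im_conj_mul_le (z w : ℂ) :
    |(starRingEnd ℂ z * w).im| ≤ (‖z‖ ^ 2 + ‖w‖ ^ 2) / 2 := by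
  have h := two_mul_le_add_sq ‖z‖ ‖w‖
  calc |(starRingEnd ℂ z * w).im| ≤ ‖starRingEnd ℂ z * w‖ := abs_im_le_norm _
    _ = ‖z‖ * ‖w‖ := by rw [norm_mul, RCLike.norm_conj]
    _ ≤ (‖z‖ ^ 2 + ‖w‖ ^ 2) / 2 := by linarith

lemma abs_weight_increment_mul_im_le {x : ℝ} (hx : 1 ≤ x) (m : ℕ) (z w : ℂ) :
    |((x + 1) ^ m - x ^ m) * (starRingEnd ℂ z * w).im|
      ≤ (2 ^ m - 1) * ((x ^ m * ‖z‖ ^ 2 + (x + 1) ^ m * ‖w‖ ^ 2) / 2) := by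
  have hmono : x ^ m ≤ (x + 1) ^ m := pow_le_pow_left₀ (by linarith) (by linarith) m
  have hC : (0 : ℝ) ≤ 2 ^ m - 1 := sub_nonneg.2 (one_le_pow₀ one_le_two)
  calc |((x + 1) ^ m - x ^ m) * (starRingEnd ℂ z * w).im|
      = ((x + 1) ^ m - x ^ m) * |(starRingEnd ℂ z * w).im| := by
        rw [abs_mul, abs_of_nonneg (sub_nonneg.2 hmono)]
    _ ≤ ((2 ^ m - 1) * x ^ m) * ((‖z‖ ^ 2 + ‖w‖ ^ 2) / 2) :=
        mul_le_mul (add_one_pow_sub_pow_le hx m) (abs_im_conj_mul_le z w) (abs_nonneg _)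
          (by positivity)
    _ ≤ (2 ^ m - 1) * ((x ^ m * ‖z‖ ^ 2 + (x + 1) ^ m * ‖w‖ ^ 2) / 2) := by
        rw [mul_assoc]
        gcongr
        nlinarith [mul_le_mul_of_nonneg_right hmono (sq_nonneg ‖w‖)]

lemma abs_tsum_le_of_abs_le_mul_avg_succ {f g : ℕ → ℝ} {c : ℝ} (hc : 0 ≤ c)
    (hg : Summable g) (hg₀ : ∀ n, 0 ≤ g n)
    (hfg : ∀ n, |f n| ≤ c * ((g n + g (n + 1)) / 2)) :
    |∑' n, f n| ≤ c * ∑' n, g n := by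
  have hg₁ : Summable fun n => g (n + 1) := (summable_nat_add_iff 1).2 hg
  have hbound : Summable fun n => c * ((g n + g (n + 1)) / 2) :=
    ((hg.add hg₁).div_const 2).mul_left c
  have hshift : ∑' n, g (n + 1) ≤ ∑' n, g n :=
    tsum_comp_le_tsum_of_inj hg hg₀ (add_left_injective 1)
  have hf : Summable fun n => |f n| := hbound.of_nonneg_of_le (fun n => abs_nonneg _) hfg
  calc |∑' n, f n| ≤ ∑' n, |f n| := by
        simpa only [Real.norm_eq_abs] using norm_tsum_le_tsum_norm (f := f) hf
    _ ≤ ∑' n, c * ((g n + g (n + 1)) / 2) := hf.tsum_le_tsum hfg hbound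
    _ = c * ((∑' n, g n + ∑' n, g (n + 1)) / 2) := by
        rw [tsum_mul_left, tsum_div_const, hg.tsum_add hg₁]
    _ ≤ c * ∑' n, g n := by gcongr; linarith

theorem molecule_weak_coupling_bound_general (k : ℕ) (a : ℕ → ℂ)
    (ha : (Function.support a).Finite) :
    |∑' n : ℕ, ((((n + 1) + 1 : ℕ) : ℝ) ^ (2 * k) - (((n + 1 : ℕ)) : ℝ) ^ (2 * k))
        * ((starRingEnd ℂ) (a (n + 1)) * a (n + 2)).im|
      ≤ (2 ^ (2 * k) - 1) * ∑' n : ℕ, (((n + 1 : ℕ) : ℝ)) ^ (2 * k) * ‖a (n + 1)‖ ^ 2 := by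
  have hsupp : (Function.support fun n : ℕ =>
      (((n + 1 : ℕ) : ℝ)) ^ (2 * k) * ‖a (n + 1)‖ ^ 2).Finite :=
    (ha.preimage (add_left_injective 1).injOn).subset fun n hn => by
      simpa using Function.support_mul_subset_right _ _ hn
  refine abs_tsum_le_of_abs_le_mul_avg_succ (sub_nonneg.2 (one_le_pow₀ one_le_two))
    (summable_of_hasFiniteSupport hsupp) (fun n => by positivity) fun n => ?_
  have hx : (1 : ℝ) ≤ ((n + 1 : ℕ) : ℝ) := by exact_mod_cast Nat.le_add_left 1 n
  simpa only [Nat.cast_succ] using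
    abs_weight_increment_mul_im_le hx (2 * k) (a (n + 1)) (a (n + 2))

/-- Weak-coupling estimate for the planar rotating molecule: for `k ≥ 1` and a
finitely supported `a : ℕ → ℂ`,
`|∑_{n=1}^∞ ((n+1)^{2k} − n^{2k})·Im(conj(a_n)·a_{n+1})|
  ≤ (2^{2k} − 1)·∑_{n=1}^∞ n^{2k}·|a_n|²`.
(The sums over `n ≥ 1` are written as sums over `n : ℕ` of the terms of index `n+1`.) -/
theorem molecule_weak_coupling_bound (k : ℕ) (hk : 1 ≤ k) (a : ℕ → ℂ)
    (ha : (Function.support a).Finite) :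
    |∑' n : ℕ, ((((n + 1) + 1 : ℕ) : ℝ) ^ (2 * k) - (((n + 1 : ℕ)) : ℝ) ^ (2 * k))
        * ((starRingEnd ℂ) (a (n + 1)) * a (n + 2)).im|
      ≤ (2 ^ (2 * k) - 1) * ∑' n : ℕ, (((n + 1 : ℕ) : ℝ)) ^ (2 * k) * ‖a (n + 1)‖ ^ 2 :=
  molecule_weak_coupling_bound_general k a ha
end

section
/- Let k ≥ 1 be an integer and let a : ℕ → ℂ be finitely supported (indices n = 0, 1, 2, …). Then |∑_{n=0}^∞ ((n + 3/2)^k − (n + 1/2)^k)·√((n+1)/2)·Im(conj(a_n)·a_{n+1})| ≤ (3^k − 1)·∑_{n=0}^∞ (n + 1/2)^k·|a_n|². -/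
open Complex

lemma arith' : ∀ m : ℕ, ((m:ℝ)+1)^2 * 3^m ≤ ((3:ℝ)^(m+1) - 1)^2 := by
  intro m
  induction m with
  | zero => norm_num
  | succ m ih =>
    have ht : (1:ℝ) ≤ 3^m := one_le_pow₀ (by norm_num)
    have h1 : ((3:ℝ))^(m+1) = 3*3^m := by ring
    have h2 : ((3:ℝ))^(m+1+1) = 9*3^m := by ring
    rw [h2]; rw [h1] at ih
    push_cast
    nlinarith [ih, ht, sq_nonneg ((m:ℝ)), mul_nonneg (by positivity : (0:ℝ) ≤ (m:ℝ)^2+(m:ℝ)) (by linarith : (0:ℝ) ≤ 3^m)]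

lemma pow_diff (x : ℝ) (hx : 0 ≤ x) : ∀ m : ℕ, (x+1)^(m+1) - x^(m+1) ≤ ((m:ℝ)+1) * (x+1)^m := by
  intro m
  induction m with
  | zero => norm_num
  | succ m ih =>
    have hp : x^(m+1) ≤ (x+1)^(m+1) := pow_le_pow_left₀ hx (by linarith) (m+1)
    have h := mul_le_mul_of_nonneg_right ih (by linarith : (0:ℝ) ≤ x+1)
    have e3 : ((m:ℝ)+1) * (x+1)^m * (x+1) = ((m:ℝ)+1) * (x+1)^(m+1) := by ring
    rw [e3] at h
    have e1 : (x+1)^(m+1+1) = (x+1)^(m+1)*(x+1) := by ring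
    have e2 : x^(m+1+1) = x^(m+1)*x := by ring
    rw [e1, e2]
    push_cast
    nlinarith [h, hp]

-- key: D * sqrt((n+1)/2) ≤ C * (sqrt(x^k) * sqrt(y^k))
lemma key (m n : ℕ) :
    ((((n:ℝ)) + 3/2)^(m+1) - (((n:ℝ)) + 1/2)^(m+1)) * Real.sqrt (((n:ℝ)+1)/2)
      ≤ ((3:ℝ)^(m+1) - 1) *
        (Real.sqrt ((((n:ℝ)) + 1/2)^(m+1)) * Real.sqrt ((((n:ℝ)) + 3/2)^(m+1))) := by
  set x : ℝ := (n:ℝ) + 1/2 with hxdef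
  set y : ℝ := (n:ℝ) + 3/2 with hydef
  have hx : (1:ℝ)/2 ≤ x := by simp [hxdef]
  have hx0 : (0:ℝ) ≤ x := le_trans (by norm_num) hx
  have hy0 : (0:ℝ) ≤ y := by rw [hydef]; positivity
  have hxy : x ≤ y := by simp [hxdef, hydef]; norm_num
  have hy3 : y ≤ 3*x := by simp [hxdef, hydef]; linarith [Nat.cast_nonneg (α := ℝ) n]
  have hyx1 : y = x + 1 := by simp [hxdef, hydef]; ring
  have hC : (2:ℝ) ≤ (3:ℝ)^(m+1) := by
    calc (2:ℝ) ≤ 3^1 := by norm_num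
    _ ≤ 3^(m+1) := pow_le_pow_right₀ (by norm_num) (by omega)
  have hC0 : (0:ℝ) ≤ (3:ℝ)^(m+1) - 1 := by linarith
  have hD0 : (0:ℝ) ≤ y^(m+1) - x^(m+1) := by
    have := pow_le_pow_left₀ hx0 hxy (m+1); linarith
  have hD : y^(m+1) - x^(m+1) ≤ ((m:ℝ)+1) * y^m := by
    have := pow_diff x hx0 m; rw [← hyx1] at this; exact this
  -- core: ((m+1)*y^m)^2 * ((n+1)/2) ≤ C^2 * (x^(m+1) * y^(m+1))
  have hxm : y^m ≤ 3^m * x^m := by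
    calc y^m ≤ (3*x)^m := pow_le_pow_left₀ hy0 hy3 m
    _ = 3^m * x^m := mul_pow 3 x m
  have hxm2 : x^m ≤ 2 * x^(m+1) := by
    have : x^(m+1) = x^m * x := by ring
    nlinarith [pow_nonneg hx0 m]
  have hcore : ((m:ℝ)+1)^2 * y^m ≤ 2 * ((3:ℝ)^(m+1) - 1)^2 * x^(m+1) := by
    calc ((m:ℝ)+1)^2 * y^m ≤ ((m:ℝ)+1)^2 * (3^m * x^m) := by
          nlinarith [sq_nonneg ((m:ℝ)+1)]
    _ ≤ ((3:ℝ)^(m+1) - 1)^2 * x^m := by nlinarith [arith' m, pow_nonneg hx0 m]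
    _ ≤ 2 * ((3:ℝ)^(m+1) - 1)^2 * x^(m+1) := by nlinarith [sq_nonneg ((3:ℝ)^(m+1) - 1)]
  have hn1 : ((n:ℝ)+1)/2 ≤ y/2 := by simp [hydef]; linarith
  have hn10 : (0:ℝ) ≤ ((n:ℝ)+1)/2 := by positivity
  -- squared inequality
  have hsq : ((y^(m+1) - x^(m+1)) * Real.sqrt (((n:ℝ)+1)/2))^2
      ≤ (((3:ℝ)^(m+1) - 1) * (Real.sqrt (x^(m+1)) * Real.sqrt (y^(m+1))))^2 := by
    rw [mul_pow, mul_pow, mul_pow, Real.sq_sqrt hn10, Real.sq_sqrt (pow_nonneg hx0 _),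
      Real.sq_sqrt (pow_nonneg hy0 _)]
    have step1 : (y^(m+1) - x^(m+1))^2 * (((n:ℝ)+1)/2) ≤ (((m:ℝ)+1) * y^m)^2 * (y/2) := by
      have h1 : (y^(m+1) - x^(m+1))^2 ≤ (((m:ℝ)+1) * y^m)^2 := pow_le_pow_left₀ hD0 hD 2
      have h2 : (0:ℝ) ≤ (((m:ℝ)+1) * y^m)^2 := sq_nonneg _
      nlinarith [h1, h2, hn1, hn10]
    have step2 : (((m:ℝ)+1) * y^m)^2 * (y/2) ≤ ((3:ℝ)^(m+1) - 1)^2 * (x^(m+1) * y^(m+1)) := by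
      have hymul := mul_le_mul_of_nonneg_right hcore
        (by positivity : (0:ℝ) ≤ y^m * y / 2)
      calc (((m:ℝ)+1) * y^m)^2 * (y/2) = (((m:ℝ)+1)^2 * y^m) * (y^m * y / 2) := by ring
      _ ≤ (2 * ((3:ℝ)^(m+1) - 1)^2 * x^(m+1)) * (y^m * y / 2) := hymul
      _ = ((3:ℝ)^(m+1) - 1)^2 * (x^(m+1) * y^(m+1)) := by ring
    linarith
  -- from squares
  have hA : (0:ℝ) ≤ (y^(m+1) - x^(m+1)) * Real.sqrt (((n:ℝ)+1)/2) :=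
    mul_nonneg hD0 (Real.sqrt_nonneg _)
  have hB : (0:ℝ) ≤ ((3:ℝ)^(m+1) - 1) * (Real.sqrt (x^(m+1)) * Real.sqrt (y^(m+1))) :=
    mul_nonneg hC0 (mul_nonneg (Real.sqrt_nonneg _) (Real.sqrt_nonneg _))
  exact (pow_le_pow_iff_left₀ hA hB (by norm_num)).mp hsq

lemma pointwise (m n : ℕ) (a : ℕ → ℂ) :
    |((((n:ℝ))+3/2)^(m+1) - (((n:ℝ))+1/2)^(m+1)) * Real.sqrt (((n:ℝ)+1)/2)
        * ((starRingEnd ℂ) (a n) * a (n+1)).im|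
      ≤ ((3:ℝ)^(m+1) - 1) *
        (((((n:ℝ))+1/2)^(m+1) * ‖a n‖^2 + ((((n+1:ℕ)):ℝ)+1/2)^(m+1) * ‖a (n+1)‖^2)/2) := by
  set x : ℝ := (n:ℝ) + 1/2 with hxdef
  set y : ℝ := (n:ℝ) + 3/2 with hydef
  have hcast : (((n+1:ℕ)):ℝ)+1/2 = y := by push_cast [hydef]; ring
  rw [hcast]
  have hx0 : (0:ℝ) ≤ x := by rw [hxdef]; positivity
  have hy0 : (0:ℝ) ≤ y := by rw [hydef]; positivity
  have hxy : x ≤ y := by rw [hxdef, hydef]; norm_num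
  have hC0 : (0:ℝ) ≤ (3:ℝ)^(m+1) - 1 := by
    have : (1:ℝ) ≤ 3^(m+1) := one_le_pow₀ (by norm_num)
    linarith
  have hD0 : (0:ℝ) ≤ y^(m+1) - x^(m+1) := by
    have := pow_le_pow_left₀ hx0 hxy (m+1); linarith
  have hAs0 : (0:ℝ) ≤ (y^(m+1) - x^(m+1)) * Real.sqrt (((n:ℝ)+1)/2) :=
    mul_nonneg hD0 (Real.sqrt_nonneg _)
  set u : ℝ := ‖a n‖
  set v : ℝ := ‖a (n+1)‖
  have hu0 : 0 ≤ u := norm_nonneg _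
  have hv0 : 0 ≤ v := norm_nonneg _
  have him : |((starRingEnd ℂ) (a n) * a (n+1)).im| ≤ u * v := by
    calc |((starRingEnd ℂ) (a n) * a (n+1)).im| ≤ ‖(starRingEnd ℂ) (a n) * a (n+1)‖ :=
          Complex.abs_im_le_norm _
    _ = u * v := by rw [norm_mul, RCLike.norm_conj]
  rw [abs_mul, _root_.abs_of_nonneg hAs0]
  have h1 : (y^(m+1) - x^(m+1)) * Real.sqrt (((n:ℝ)+1)/2) * |((starRingEnd ℂ) (a n) * a (n+1)).im|
      ≤ (y^(m+1) - x^(m+1)) * Real.sqrt (((n:ℝ)+1)/2) * (u*v) :=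
    mul_le_mul_of_nonneg_left him hAs0
  have h2 : (y^(m+1) - x^(m+1)) * Real.sqrt (((n:ℝ)+1)/2) * (u*v)
      ≤ ((3:ℝ)^(m+1) - 1) * (Real.sqrt (x^(m+1)) * Real.sqrt (y^(m+1))) * (u*v) :=
    mul_le_mul_of_nonneg_right (key m n) (mul_nonneg hu0 hv0)
  have hamgm : (Real.sqrt (x^(m+1)) * u) * (Real.sqrt (y^(m+1)) * v)
      ≤ (x^(m+1) * u^2 + y^(m+1) * v^2)/2 := by
    have := two_mul_le_add_sq (Real.sqrt (x^(m+1)) * u) (Real.sqrt (y^(m+1)) * v)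
    have e1 : (Real.sqrt (x^(m+1)) * u)^2 = x^(m+1) * u^2 := by
      rw [mul_pow, Real.sq_sqrt (pow_nonneg hx0 _)]
    have e2 : (Real.sqrt (y^(m+1)) * v)^2 = y^(m+1) * v^2 := by
      rw [mul_pow, Real.sq_sqrt (pow_nonneg hy0 _)]
    linarith [this, e1 ▸ e2 ▸ this]
  have h3 : ((3:ℝ)^(m+1) - 1) * (Real.sqrt (x^(m+1)) * Real.sqrt (y^(m+1))) * (u*v)
      ≤ ((3:ℝ)^(m+1) - 1) * ((x^(m+1) * u^2 + y^(m+1) * v^2)/2) := by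
    have := mul_le_mul_of_nonneg_left hamgm hC0
    calc ((3:ℝ)^(m+1) - 1) * (Real.sqrt (x^(m+1)) * Real.sqrt (y^(m+1))) * (u*v)
        = ((3:ℝ)^(m+1) - 1) * ((Real.sqrt (x^(m+1)) * u) * (Real.sqrt (y^(m+1)) * v)) := by ring
    _ ≤ _ := this
  linarith

/-- Weak-coupling estimate for the controlled quantum harmonic oscillator:
for `k ≥ 1` and finitely supported `a : ℕ → ℂ`,
`|∑_{n=0}^∞ ((n + 3/2)^k − (n + 1/2)^k)·√((n+1)/2)·Im(conj(a_n)·a_{n+1})|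
  ≤ (3^k − 1)·∑_{n=0}^∞ (n + 1/2)^k·|a_n|²`. -/
theorem oscillator_weak_coupling_bound (k : ℕ) (hk : 1 ≤ k) (a : ℕ → ℂ)
    (ha : (Function.support a).Finite) :
    |∑' n : ℕ, (((n : ℝ) + 3 / 2) ^ k - ((n : ℝ) + 1 / 2) ^ k)
        * Real.sqrt (((n : ℝ) + 1) / 2) * ((starRingEnd ℂ) (a n) * a (n + 1)).im|
      ≤ (3 ^ k - 1) * ∑' n : ℕ, ((n : ℝ) + 1 / 2) ^ k * ‖a n‖ ^ 2 := by
  obtain ⟨m, rfl⟩ : ∃ m, k = m + 1 := ⟨k - 1, by omega⟩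
  obtain ⟨N, hN⟩ : ∃ N, ∀ n, N ≤ n → a n = 0 := by
    obtain ⟨M, hM⟩ := ha.bddAbove
    refine ⟨M + 1, fun n hn => ?_⟩
    by_contra h
    have := hM (Function.mem_support.mpr h)
    omega
  set f : ℕ → ℝ := fun n => (((n : ℝ) + 3 / 2) ^ (m+1) - ((n : ℝ) + 1 / 2) ^ (m+1))
        * Real.sqrt (((n : ℝ) + 1) / 2) * ((starRingEnd ℂ) (a n) * a (n + 1)).im with hf
  set g : ℕ → ℝ := fun n => ((n : ℝ) + 1 / 2) ^ (m+1) * ‖a n‖ ^ 2 with hg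
  have hg0 : ∀ n, 0 ≤ g n := fun n => by positivity
  have hfz : ∀ n ∉ Finset.range N, f n = 0 := by
    intro n hn
    simp only [Finset.mem_range, not_lt] at hn
    simp [hf, hN n hn]
  have hgz : ∀ n ∉ Finset.range N, g n = 0 := by
    intro n hn
    simp only [Finset.mem_range, not_lt] at hn
    simp [hg, hN n hn]
  rw [show (∑' n : ℕ, (((n : ℝ) + 3 / 2) ^ (m+1) - ((n : ℝ) + 1 / 2) ^ (m+1))
        * Real.sqrt (((n : ℝ) + 1) / 2) * ((starRingEnd ℂ) (a n) * a (n + 1)).im)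
      = ∑ n ∈ Finset.range N, f n from tsum_eq_sum hfz,
    show (∑' n : ℕ, ((n : ℝ) + 1 / 2) ^ (m+1) * ‖a n‖ ^ 2)
      = ∑ n ∈ Finset.range N, g n from tsum_eq_sum hgz]
  set C : ℝ := (3:ℝ)^(m+1) - 1 with hCdef
  have hC0 : (0:ℝ) ≤ C := by
    have : (1:ℝ) ≤ 3^(m+1) := one_le_pow₀ (by norm_num)
    simp [hCdef]; linarith
  calc |∑ n ∈ Finset.range N, f n| ≤ ∑ n ∈ Finset.range N, |f n| :=
        Finset.abs_sum_le_sum_abs _ _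
  _ ≤ ∑ n ∈ Finset.range N, C * ((g n + g (n+1))/2) := by
      refine Finset.sum_le_sum fun n _ => ?_
      have := pointwise m n a
      simpa [hf, hg, hCdef] using this
  _ = C * ((∑ n ∈ Finset.range N, g n + ∑ n ∈ Finset.range N, g (n+1))/2) := by
      rw [← Finset.sum_add_distrib, ← Finset.mul_sum]
      congr 1
      rw [← Finset.sum_div]
  _ ≤ C * ∑ n ∈ Finset.range N, g n := by
      have hshift : ∑ n ∈ Finset.range N, g (n+1) ≤ ∑ n ∈ Finset.range N, g n := by
        have h1 : ∑ n ∈ Finset.range (N+1), g n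
            = ∑ n ∈ Finset.range N, g (n+1) + g 0 := Finset.sum_range_succ' g N
        have h2 : ∑ n ∈ Finset.range (N+1), g n
            = ∑ n ∈ Finset.range N, g n + g N := Finset.sum_range_succ g N
        have hgN : g N = 0 := by simp [hg, hN N le_rfl]
        have := hg0 0
        linarith
      have := hg0
      have hsum0 : 0 ≤ ∑ n ∈ Finset.range N, g n := Finset.sum_nonneg fun n _ => hg0 n
      nlinarith [mul_le_mul_of_nonneg_left hshift hC0]
  _ = C * ∑ n ∈ Finset.range N, g n := rfl
end

section
/- Let a : ℕ → ℂ be finitely supported, and set a_{−1} = 0. Then ∑_{n=0}^∞ |√((n+1)/2)·a_{n+1} + √(n/2)·a_{n−1}|² ≤ 2·∑_{n=0}^∞ (n + 1/2)·|a_n|². -/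
open Complex

/-- The position operator of the quantum harmonic oscillator is relatively bounded by
`|A|^{1/2}`: for finitely supported `a : ℕ → ℂ` (with the convention `a_{−1} = 0`,
here enforced by the vanishing coefficient `√(0/2) = 0` at `n = 0`),
`∑_{n=0}^∞ |√((n+1)/2)·a_{n+1} + √(n/2)·a_{n−1}|² ≤ 2·∑_{n=0}^∞ (n + 1/2)·|a_n|²`. -/
theorem oscillator_position_relatively_bounded (a : ℕ → ℂ)
    (ha : (Function.support a).Finite) :
    (∑' n : ℕ, ‖(Real.sqrt (((n : ℝ) + 1) / 2) : ℂ) * a (n + 1)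
        + (Real.sqrt ((n : ℝ) / 2) : ℂ) * a (n - 1)‖ ^ 2)
      ≤ 2 * ∑' n : ℕ, ((n : ℝ) + 1 / 2) * ‖a n‖ ^ 2 := by
  -- get N with a n = 0 for n ≥ N
  obtain ⟨N, hN⟩ : ∃ N, ∀ n, N ≤ n → a n = 0 := by
    obtain ⟨N, hN⟩ := (ha.bddAbove).imp (fun N h => h)
    exact ⟨N + 1, fun n hn => by
      by_contra h
      have := hN (Function.mem_support.mpr h)
      omega⟩
  have key : ∀ n, a n ≠ 0 → n < N := fun n h => by
    by_contra h'; exact h (hN n (by omega))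
  -- summability helpers
  have hzero : ∀ (F : ℕ → ℝ), (∀ n, N + 2 ≤ n → F n = 0) →
      Summable F ∧ (∑' n, F n) = ∑ n ∈ Finset.range (N + 2), F n := by
    intro F hF
    have h0 : ∀ n ∉ Finset.range (N + 2), F n = 0 := by
      intro n hn; exact hF n (by simp [Finset.mem_range] at hn; omega)
    exact ⟨summable_of_ne_finset_zero h0, tsum_eq_sum h0⟩
  set f : ℕ → ℝ := fun n => ‖(Real.sqrt (((n : ℝ) + 1) / 2) : ℂ) * a (n + 1)
        + (Real.sqrt ((n : ℝ) / 2) : ℂ) * a (n - 1)‖ ^ 2 with hf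
  set g : ℕ → ℝ := fun n => ((n : ℝ) + 1) * ‖a (n + 1)‖ ^ 2 + (n : ℝ) * ‖a (n - 1)‖ ^ 2 with hg
  have hfg : ∀ n, f n ≤ g n := by
    intro n
    have h1 : ‖(Real.sqrt (((n : ℝ) + 1) / 2) : ℂ) * a (n + 1)‖ ^ 2
        = (((n : ℝ) + 1) / 2) * ‖a (n + 1)‖ ^ 2 := by
      rw [norm_mul, mul_pow, Complex.norm_real, Real.norm_eq_abs, _root_.sq_abs,
        Real.sq_sqrt (by positivity)]
    have h2 : ‖(Real.sqrt ((n : ℝ) / 2) : ℂ) * a (n - 1)‖ ^ 2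
        = ((n : ℝ) / 2) * ‖a (n - 1)‖ ^ 2 := by
      rw [norm_mul, mul_pow, Complex.norm_real, Real.norm_eq_abs, _root_.sq_abs,
        Real.sq_sqrt (by positivity)]
    have htri := norm_add_le ((Real.sqrt (((n : ℝ) + 1) / 2) : ℂ) * a (n + 1))
      ((Real.sqrt ((n : ℝ) / 2) : ℂ) * a (n - 1))
    have hsq : f n ≤ 2 * ‖(Real.sqrt (((n : ℝ) + 1) / 2) : ℂ) * a (n + 1)‖ ^ 2
        + 2 * ‖(Real.sqrt ((n : ℝ) / 2) : ℂ) * a (n - 1)‖ ^ 2 := by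
      have key2 : ∀ s t x : ℝ, 0 ≤ s → 0 ≤ t → 0 ≤ x → x ≤ s + t →
          x ^ 2 ≤ 2 * s ^ 2 + 2 * t ^ 2 := by
        intro s t x hs ht hx h
        nlinarith [sq_nonneg (s - t)]
      exact key2 _ _ _ (norm_nonneg _) (norm_nonneg _) (norm_nonneg _) htri
    calc f n ≤ _ := hsq
      _ = g n := by rw [h1, h2, hg]; ring
  have hfvan : ∀ n, N + 2 ≤ n → f n = 0 := by
    intro n hn
    simp only [hf, hN (n + 1) (by omega), hN (n - 1) (by omega), mul_zero, add_zero,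
      norm_zero]
    ring
  have hgvan : ∀ n, N + 2 ≤ n → g n = 0 := by
    intro n hn
    simp only [hg, hN (n + 1) (by omega), hN (n - 1) (by omega), norm_zero]
    ring
  obtain ⟨hfs, _⟩ := hzero f hfvan
  obtain ⟨hgs, _⟩ := hzero g hgvan
  have step1 : (∑' n, f n) ≤ ∑' n, g n := Summable.tsum_le_tsum hfg hfs hgs
  -- compute ∑ g = 2 ∑ (n+1/2)‖a n‖²
  set F : ℕ → ℝ := fun n => (n : ℝ) * ‖a n‖ ^ 2 with hF
  set G : ℕ → ℝ := fun n => (n : ℝ) * ‖a (n - 1)‖ ^ 2 with hG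
  have hFvan : ∀ n, N + 2 ≤ n → F n = 0 := fun n hn => by
    simp [hF, hN n (by omega)]
  have hGvan : ∀ n, N + 2 ≤ n → G n = 0 := fun n hn => by
    simp [hG, hN (n - 1) (by omega)]
  obtain ⟨hFs, _⟩ := hzero F hFvan
  obtain ⟨hGs, _⟩ := hzero G hGvan
  have hFs' : Summable (fun n => F (n + 1)) := (summable_nat_add_iff 1).mpr hFs
  have hGs' : Summable (fun n => G (n + 1)) := (summable_nat_add_iff 1).mpr hGs
  have hsplit : (∑' n, g n) = (∑' n, F (n + 1)) + ∑' n, G n := by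
    have : g = fun n => F (n + 1) + G n := by
      funext n; simp only [hg, hF, hG]; push_cast; ring
    rw [this, Summable.tsum_add hFs' hGs]
  have hFshift : (∑' n, F (n + 1)) = ∑' n, F n := by
    rw [Summable.tsum_eq_zero_add hFs]
    simp [hF]
  have hGshift : (∑' n, G n) = ∑' n, (↑n + 1 : ℝ) * ‖a n‖ ^ 2 := by
    rw [Summable.tsum_eq_zero_add hGs]
    simp only [hG, Nat.cast_zero, zero_mul, zero_add]
    congr 1
    funext n
    push_cast
    simp
  have hfinal : (∑' n, g n) = 2 * ∑' n : ℕ, ((n : ℝ) + 1 / 2) * ‖a n‖ ^ 2 := by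
    rw [hsplit, hFshift, hGshift, ← Summable.tsum_add hFs]
    · rw [← tsum_mul_left]
      congr 1
      funext n
      simp only [hF]
      ring
    · obtain ⟨h, _⟩ := hzero (fun n => ((n : ℝ) + 1) * ‖a n‖ ^ 2)
        (fun n hn => by simp [hN n (by omega)])
      exact h
  calc (∑' n, f n) ≤ ∑' n, g n := step1
    _ = _ := hfinal
end

section
/- Let a : ℕ → ℂ be finitely supported. Then |Re ∑_{n=0}^∞ √((n+1)(n+2))·conj(a_n)·a_{n+2}| ≤ ∑_{n=0}^∞ (n + 1/2)·|a_n|². -/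
open Complex

/-!
Each off-diagonal term is bounded by AM–GM:
`√((n+1)(n+2)) |a_n| |a_{n+2}| ≤ ((n+1) |a_n|² + (n+2) |a_{n+2}|²) / 2`.
Summing over `n`, the second halves form the series `∑ m/2 · |a_m|²` with the terms `m = 0, 1`
dropped, so together with the first halves they are dominated by `∑ (n + 1/2) |a_n|²`.
-/

theorem summable_mul_norm_sq_of_finite_support {ι E : Type*} [SeminormedAddCommGroup E]
    {a : ι → E} (ha : (Function.support a).Finite) (c : ι → ℝ) :
    Summable fun i => c i * ‖a i‖ ^ 2 :=
  summable_of_hasFiniteSupport <| ha.subset <| Function.support_subset_iff'.2 fun i hi => by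
    simp [Function.notMem_support.1 hi]

theorem norm_sqrt_mul_conj_mul_le {s t : ℝ} (hs : 0 ≤ s) (ht : 0 ≤ t) (x y : ℂ) :
    ‖(Real.sqrt (s * t) : ℂ) * (starRingEnd ℂ x * y)‖ ≤ (s * ‖x‖ ^ 2 + t * ‖y‖ ^ 2) / 2 := by
  have hnorm : ‖(Real.sqrt (s * t) : ℂ) * (starRingEnd ℂ x * y)‖
      = (√s * ‖x‖) * (√t * ‖y‖) := by
    rw [norm_mul, norm_mul, norm_real, Real.norm_of_nonneg (Real.sqrt_nonneg _),
      Real.sqrt_mul hs, RCLike.norm_conj]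
    ring
  rw [hnorm]
  nlinarith [two_mul_le_add_sq (√s * ‖x‖) (√t * ‖y‖), Real.sq_sqrt hs, Real.sq_sqrt ht]

theorem tsum_nat_add_le_tsum {f : ℕ → ℝ} (hf : Summable f) (hf₀ : ∀ n, 0 ≤ f n) (k : ℕ) :
    ∑' n, f (n + k) ≤ ∑' n, f n :=
  tsum_comp_le_tsum_of_inj hf hf₀ (add_left_injective k)

/-- Positivity step in bounding the position operator by `|A|^{1/2}` for the quantum
harmonic oscillator: for finitely supported `a : ℕ → ℂ`,
`|Re ∑_{n=0}^∞ √((n+1)(n+2))·conj(a_n)·a_{n+2}| ≤ ∑_{n=0}^∞ (n + 1/2)·|a_n|²`. -/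
theorem oscillator_offdiagonal_bound (a : ℕ → ℂ)
    (ha : (Function.support a).Finite) :
    |(∑' n : ℕ, (Real.sqrt (((n : ℝ) + 1) * ((n : ℝ) + 2)) : ℂ)
        * ((starRingEnd ℂ) (a n) * a (n + 2))).re|
      ≤ ∑' n : ℕ, ((n : ℝ) + 1 / 2) * ‖a n‖ ^ 2 := by
  set T : ℕ → ℂ := fun n => (Real.sqrt (((n : ℝ) + 1) * ((n : ℝ) + 2)) : ℂ)
    * ((starRingEnd ℂ) (a n) * a (n + 2))
  set f : ℕ → ℝ := fun n => ((n : ℝ) + 1) / 2 * ‖a n‖ ^ 2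
  set g : ℕ → ℝ := fun n => (n : ℝ) / 2 * ‖a n‖ ^ 2
  have hf : Summable f := summable_mul_norm_sq_of_finite_support ha _
  have hg : Summable g := summable_mul_norm_sq_of_finite_support ha _
  have hg₂ : Summable fun n => g (n + 2) := (summable_nat_add_iff 2).2 hg
  have hT (n : ℕ) : ‖T n‖ ≤ f n + g (n + 2) := by
    have := norm_sqrt_mul_conj_mul_le (s := (n : ℝ) + 1) (t := (n : ℝ) + 2)
      (by positivity) (by positivity) (a n) (a (n + 2))
    simp only [f, g]
    push_cast
    linarith
  have hTsum : Summable fun n => ‖T n‖ :=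
    (hf.add hg₂).of_nonneg_of_le (fun _ => norm_nonneg _) hT
  calc |(∑' n, T n).re|
      ≤ ∑' n, ‖T n‖ := (abs_re_le_norm _).trans (norm_tsum_le_tsum_norm hTsum)
    _ ≤ ∑' n, (f n + g (n + 2)) := hTsum.tsum_le_tsum hT (hf.add hg₂)
    _ = ∑' n, f n + ∑' n, g (n + 2) := hf.tsum_add hg₂
    _ ≤ ∑' n, f n + ∑' n, g n :=
        add_le_add le_rfl (tsum_nat_add_le_tsum hg (fun _ => by positivity) 2)
    _ = ∑' n : ℕ, ((n : ℝ) + 1 / 2) * ‖a n‖ ^ 2 := by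
        rw [← hf.tsum_add hg]
        congr 1 with n
        simp only [f, g]
        ring
end

section
/- Let He_n denote the n-th probabilists' Hermite polynomial. For every natural number m, ∫_ℝ x⁴·He_m(x)·He_{m+2}(x)·exp(−x²/2) dx = (4m + 6)·(m+2)!·√(2π). -/
/-!
Write `γ(x) = exp (-x² / 2)`. Since `(q γ)' = (q' - X q) γ`, integration by parts gives
`∫ X q γ = ∫ q' γ`; combined with `He_{n+1} = X He_n - He_n'` this yields `∫ p He_n γ = ∫ p⁽ⁿ⁾ γ`.
For `p = X⁴ He_m` and `n = m + 2`, the derivative `p⁽ᵐ⁺²⁾` is a quadratic whose constant term is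
`(m+2)!` times the coefficient `-m(m-1)/2` of `x^(m-2)` in `He_m`, and whose leading coefficient is
`(m+4)!/2`. Finally `∫ (a + b x + c x²) γ = (a + c) √(2π)`, and
`(m+2)! (-m(m-1) + (m+4)(m+3)) / 2 = (4m+6) (m+2)!`.
-/

open Polynomial Real MeasureTheory
open scoped Nat

lemma integrable_pow_mul_exp_neg_sq_div_two (n : ℕ) :
    Integrable fun x : ℝ => x ^ n * exp (-x ^ 2 / 2) := by
  refine (integrable_rpow_mul_exp_neg_mul_sq (b := 1 / 2) (by norm_num)
    (s := n) (by linarith [n.cast_nonneg (α := ℝ)])).congr (.of_eq (funext fun x => ?_))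
  rw [rpow_natCast]
  ring_nf

lemma integrable_eval_mul_exp_neg_sq_div_two (q : ℝ[X]) :
    Integrable fun x : ℝ => q.eval x * exp (-x ^ 2 / 2) := by
  induction q using Polynomial.induction_on' with
  | add p q hp hq =>
    simp only [eval_add, add_mul]
    exact hp.add hq
  | monomial n a =>
    simpa only [eval_monomial, mul_assoc] using
      (integrable_pow_mul_exp_neg_sq_div_two n).const_mul a

noncomputable def gaussianIntegral : ℝ[X] →ₗ[ℝ] ℝ where
  toFun q := ∫ x, q.eval x * exp (-x ^ 2 / 2)
  map_add' p q := by
    simp only [eval_add, add_mul]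
    exact integral_add (integrable_eval_mul_exp_neg_sq_div_two p)
      (integrable_eval_mul_exp_neg_sq_div_two q)
  map_smul' a q := by
    simp only [eval_smul, smul_eq_mul, mul_assoc, RingHom.id_apply]
    exact integral_const_mul a _

lemma gaussianIntegral_apply (q : ℝ[X]) :
    gaussianIntegral q = ∫ x, q.eval x * exp (-x ^ 2 / 2) := rfl

lemma gaussianIntegral_one : gaussianIntegral 1 = √(2 * π) := by
  have h := integral_gaussian (1 / 2)
  rw [show π / (1 / 2) = 2 * π by ring] at h
  rw [gaussianIntegral_apply, ← h]
  congr 1 with x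
  rw [eval_one, one_mul]
  ring_nf

lemma gaussianIntegral_X_mul (q : ℝ[X]) :
    gaussianIntegral (X * q) = gaussianIntegral (derivative q) := by
  rw [eq_comm, ← sub_eq_zero, ← map_sub, gaussianIntegral_apply]
  refine integral_eq_zero_of_hasDerivAt_of_integrable (fun x => ?_)
    (integrable_eval_mul_exp_neg_sq_div_two _) (integrable_eval_mul_exp_neg_sq_div_two q)
  have hexp : HasDerivAt (fun y : ℝ => exp (-y ^ 2 / 2)) (-x * exp (-x ^ 2 / 2)) x := by
    have h : HasDerivAt (fun y : ℝ => -y ^ 2 / 2) (-x) x := by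
      simpa using ((hasDerivAt_pow 2 x).neg.div_const 2).congr_deriv (by ring)
    simpa [mul_comm] using h.exp
  refine ((q.hasDerivAt x).mul hexp).congr_deriv ?_
  simp only [eval_sub, eval_mul, eval_X]
  ring

lemma gaussianIntegral_mul_map_hermite (p : ℝ[X]) (n : ℕ) :
    gaussianIntegral (p * (hermite n).map (Int.castRingHom ℝ)) =
      gaussianIntegral (derivative^[n] p) := by
  induction n generalizing p with
  | zero => simp
  | succ n ih =>
    set H := (hermite n).map (Int.castRingHom ℝ)
    have hsplit : p * (hermite (n + 1)).map (Int.castRingHom ℝ) =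
        X * (p * H) - (derivative (p * H) - derivative p * H) := by
      rw [hermite_succ, Polynomial.map_sub, Polynomial.map_mul, map_X, ← derivative_map,
        derivative_mul]
      ring
    rw [hsplit, map_sub, map_sub, gaussianIntegral_X_mul, sub_sub_cancel, ih,
      ← Function.iterate_succ_apply]

lemma gaussianIntegral_of_natDegree_le_two {q : ℝ[X]} (hq : q.natDegree ≤ 2) :
    gaussianIntegral q = (q.coeff 0 + q.coeff 2) * √(2 * π) := by
  have hX : gaussianIntegral X = 0 := by
    simpa using gaussianIntegral_X_mul 1
  have hX2 : gaussianIntegral (X ^ 2) = √(2 * π) := by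
    rw [sq, gaussianIntegral_X_mul, derivative_X, gaussianIntegral_one]
  conv_lhs => rw [q.as_sum_range_C_mul_X_pow' (Nat.lt_succ_of_le hq)]
  simp only [Finset.sum_range_succ, Finset.sum_range_zero, C_mul', map_add, map_smul,
    pow_zero, pow_one, map_zero, gaussianIntegral_one, hX, hX2, smul_eq_mul]
  ring

lemma two_mul_coeff_hermite_add_two_self (k : ℕ) :
    2 * (hermite (k + 2)).coeff k = -((k + 2) * (k + 1)) := by
  induction k with
  | zero =>
    rw [coeff_hermite_succ_zero, hermite_one, coeff_X_one]
    norm_num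
  | succ k ih =>
    rw [show k + 1 + 2 = k + 2 + 1 from rfl, coeff_hermite_succ_succ, coeff_hermite_self,
      mul_sub, ih]
    push_cast
    ring

lemma two_mul_coeff_X_pow_four_mul_hermite (m : ℕ) :
    2 * (X ^ 4 * hermite m).coeff (m + 2) = -((m : ℤ) * (m - 1)) := by
  rw [coeff_X_pow_mul']
  match m with
  | 0 | 1 => simp
  | k + 2 =>
    rw [if_pos (by omega), show k + 2 + 2 - 4 = k by omega, two_mul_coeff_hermite_add_two_self]
    push_cast
    ring

lemma natDegree_iterate_derivative_X_pow_mul_hermite_le (j m k : ℕ) :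
    (derivative^[k] (X ^ j * hermite m)).natDegree ≤ j + m - k := by
  have hP : (X ^ j * hermite m : ℤ[X]).natDegree ≤ j + m :=
    natDegree_mul_le.trans (by rw [natDegree_X_pow, natDegree_hermite])
  have := natDegree_iterate_derivative (X ^ j * hermite m) k
  omega

lemma coeff_zero_add_coeff_two_iterate_derivative (m : ℕ) :
    (derivative^[m + 2] (X ^ 4 * hermite m : ℤ[X])).coeff 0 +
        (derivative^[m + 2] (X ^ 4 * hermite m : ℤ[X])).coeff 2 = (4 * m + 6) * (m + 2)! := by
  rw [coeff_iterate_derivative, coeff_iterate_derivative, zero_add, Nat.descFactorial_self,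
    show 2 + (m + 2) = m + 4 by omega, coeff_X_pow_mul' _ 4 (m + 4), if_pos (by omega),
    Nat.add_sub_cancel, coeff_hermite_self, nsmul_eq_mul, nsmul_eq_mul, mul_one]
  have hdesc : 2 * (m + 4).descFactorial (m + 2) = (m + 4) * (m + 3) * (m + 2)! := by
    have h := Nat.factorial_mul_descFactorial (show m + 2 ≤ m + 4 by omega)
    rw [show m + 4 - (m + 2) = 2 by omega, Nat.factorial_two] at h
    rw [h, Nat.factorial_succ, Nat.factorial_succ]
    ring
  have hdesc' : (2 : ℤ) * (m + 4).descFactorial (m + 2) = (m + 4) * (m + 3) * (m + 2)! := by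
    exact_mod_cast hdesc
  refine mul_left_cancel₀ (two_ne_zero (α := ℤ)) ?_
  linear_combination (((m + 2)! : ℕ) : ℤ) * two_mul_coeff_X_pow_four_mul_hermite m + hdesc'

/-- Matrix element of `x⁴` between Hermite functions two levels apart:
`∫ x⁴·He_m(x)·He_{m+2}(x)·exp(−x²/2) dx = (4m + 6)·(m+2)!·√(2π)`. -/
theorem hermite_x4_matrix_element (m : ℕ) :
    ∫ x : ℝ, x ^ 4 * (Polynomial.aeval x (Polynomial.hermite m))
        * (Polynomial.aeval x (Polynomial.hermite (m + 2))) * Real.exp (-x ^ 2 / 2)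
      = (4 * (m : ℝ) + 6) * ((m + 2).factorial : ℝ) * Real.sqrt (2 * Real.pi) := by
  have hint : (∫ x : ℝ, x ^ 4 * (Polynomial.aeval x (Polynomial.hermite m))
        * (Polynomial.aeval x (Polynomial.hermite (m + 2))) * Real.exp (-x ^ 2 / 2)) =
      gaussianIntegral ((X ^ 4 * hermite m).map (Int.castRingHom ℝ) *
        (hermite (m + 2)).map (Int.castRingHom ℝ)) := by
    simp only [gaussianIntegral_apply, aeval_def, eval₂_eq_eval_map, algebraMap_int_eq,
      Polynomial.map_mul, Polynomial.map_pow, map_X, eval_mul, eval_pow, eval_X]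
  have hdeg := natDegree_iterate_derivative_X_pow_mul_hermite_le 4 m (m + 2)
  rw [show 4 + m - (m + 2) = 2 by omega] at hdeg
  rw [hint, gaussianIntegral_mul_map_hermite, iterate_derivative_map,
    gaussianIntegral_of_natDegree_le_two (natDegree_map_le.trans hdeg), coeff_map, coeff_map,
    ← map_add, coeff_zero_add_coeff_two_iterate_derivative, eq_intCast]
  push_cast
  ring
end

section
/- Let H be an infinite-dimensional separable complex Hilbert space, let A, B : H → H be bounded linear operators, let ψ₀ ∈ H, and let r > 1. Define the attainable set S as the set of all x ∈ H for which there exist T ≥ 0, a function u : ℝ → ℝ whose restriction to [0,T] is in L^r, and a continuous function ψ : [0,T] → H with ψ(0) = ψ₀, ψ(t) = ψ₀ + ∫₀^t (A ψ(s) + u(s)·B ψ(s)) ds for all t ∈ [0,T], and ψ(T) = x. Then S is meager in H (it is contained in a countable union of closed sets with empty interior); in particular S has empty interior in H. -/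
/-!
Put `w(s) = ‖A‖ + |u(s)| ‖B‖` and suppose `∫₀ᵀ w ≤ m`. Cut `[0, T]` into `q` pieces of
weight at most `δ = m/q` and freeze `ψ` on each piece `[a, c]`: the resulting Euler scheme
`x ↦ x + (c - a) A x + (∫ₐᶜ u) B x` stays in the span of the words of length `≤ q` in `A`, `B`
applied to `ψ₀`, has norm `≤ e^{2m} ‖ψ₀‖`, and ends within `O(e^{2m} m² ‖ψ₀‖ / q)` of `ψ(T)`.
So the states reachable with weight `≤ m` are uniformly approximated by bounded subsets of
finite-dimensional spaces, hence totally bounded; their closure is compact and, by Riesz's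
theorem, has empty interior in infinite dimension. An `L^r` control on a compact interval is
integrable, so the attainable set lies in the union of these closures over `m ∈ ℕ`, and Baire's
theorem finishes the proof.
-/

open MeasureTheory Set

theorem interior_eq_empty_of_subset_iUnion_isClosed {X ι : Type*} [TopologicalSpace X]
    [BaireSpace X] [Countable ι] {s : Set X} {F : ι → Set X}
    (hF : ∀ i, IsClosed (F i) ∧ interior (F i) = ∅) (hs : s ⊆ ⋃ i, F i) : interior s = ∅ := by
  have hmeagre : IsMeagre s :=
    (isMeagre_iUnion fun i => ((hF i).1.isNowhereDense_iff.2 (hF i).2).isMeagre).mono hs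
  by_contra h
  exact not_isMeagre_of_isOpen isOpen_interior (nonempty_iff_ne_empty.2 h)
    (hmeagre.mono interior_subset)

theorem IsCompact.interior_eq_empty_of_not_finiteDimensional (𝕜 : Type*) {E : Type*}
    [NontriviallyNormedField 𝕜] [CompleteSpace 𝕜] [AddCommGroup E] [TopologicalSpace E]
    [IsTopologicalAddGroup E] [Module 𝕜 E] [ContinuousSMul 𝕜 E] [T2Space E]
    (hE : ¬ FiniteDimensional 𝕜 E) {K : Set E} (hK : IsCompact K) : interior K = ∅ := by
  by_contra h
  obtain ⟨x, hx⟩ := nonempty_iff_ne_empty.2 h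
  have := hK.locallyCompactSpace_of_mem_nhds_of_addGroup (mem_interior_iff_mem_nhds.1 hx)
  exact hE (.of_locallyCompactSpace 𝕜)

theorem totallyBounded_of_forall_exists_finiteDimensional {E : Type*} [NormedAddCommGroup E]
    [NormedSpace ℝ E] {s : Set E}
    (h : ∀ ε > 0, ∃ (V : Submodule ℝ E) (_ : FiniteDimensional ℝ V) (R : ℝ),
      ∀ x ∈ s, ∃ y ∈ V, ‖y‖ ≤ R ∧ dist x y ≤ ε) :
    TotallyBounded s := by
  refine Metric.totallyBounded_iff.2 fun ε hε => ?_
  obtain ⟨V, _, R, hV⟩ := h (ε / 2) (half_pos hε)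
  have hK : IsCompact (Subtype.val '' Metric.closedBall (0 : V) R) :=
    (isCompact_closedBall 0 R).image continuous_subtype_val
  obtain ⟨t, ht, hcover⟩ := Metric.totallyBounded_iff.1 hK.totallyBounded (ε / 2) (half_pos hε)
  refine ⟨t, ht, fun x hx => ?_⟩
  obtain ⟨y, hyV, hyR, hxy⟩ := hV x hx
  obtain ⟨z, hz, hyz⟩ := mem_iUnion₂.1 (hcover ⟨⟨y, hyV⟩, by simpa using hyR, rfl⟩)
  exact mem_iUnion₂.2 ⟨z, hz, Metric.mem_ball.2 <| by
    linarith [dist_triangle x y z, (Metric.mem_ball.1 hyz : dist y z < ε / 2)]⟩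

theorem one_add_two_mul_div_pow_le_exp {M : ℝ} (hM : 0 ≤ M) (q : ℕ) :
    (1 + 2 * (M / q)) ^ q ≤ Real.exp (2 * M) := by
  rcases Nat.eq_zero_or_pos q with rfl | hq
  · simp [hM]
  calc (1 + 2 * (M / q)) ^ q ≤ Real.exp (2 * (M / q)) ^ q := by
        gcongr
        linarith [Real.add_one_le_exp (2 * (M / q))]
    _ = Real.exp (2 * M) := by rw [← Real.exp_nat_mul]; field_simp

section RealIntervals

variable {a b : ℝ}

theorem IntervalIntegrable.mono_of_mem_Icc {F : Type*} [NormedAddCommGroup F] {f : ℝ → F}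
    (hf : IntervalIntegrable f volume a b) {c d : ℝ} (hc : c ∈ Icc a b) (hd : d ∈ Icc a b) :
    IntervalIntegrable f volume c d :=
  hf.mono_set (uIcc_subset_uIcc (Icc_subset_uIcc hc) (Icc_subset_uIcc hd))

theorem exists_mem_Icc_integral_le_and_integral_le {w : ℝ → ℝ} (hab : a ≤ b)
    (hw : IntervalIntegrable w volume a b) (hw0 : ∀ s ∈ Icc a b, 0 ≤ w s) {δ : ℝ} (hδ : 0 ≤ δ)
    {q : ℕ} (h : ∫ s in a..b, w s ≤ (q + 1) * δ) :
    ∃ c ∈ Icc a b, ∫ s in a..c, w s ≤ δ ∧ ∫ s in c..b, w s ≤ q * δ := by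
  have hcont : ContinuousOn (fun t => ∫ s in a..t, w s) (Icc a b) := by
    simpa only [uIcc_of_le hab] using
      intervalIntegral.continuousOn_primitive_interval' hw left_mem_uIcc
  have hlevel : min δ (∫ s in a..b, w s) ∈ Icc (∫ s in a..a, w s) (∫ s in a..b, w s) := by
    rw [intervalIntegral.integral_same]
    exact ⟨le_min hδ (intervalIntegral.integral_nonneg hab hw0), min_le_right _ _⟩
  obtain ⟨c, hc, hwc : ∫ s in a..c, w s = _⟩ := intermediate_value_Icc hab hcont hlevel
  refine ⟨c, hc, hwc ▸ min_le_left _ _, ?_⟩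
  rw [← intervalIntegral.integral_interval_sub_left hw (hw.mono_of_mem_Icc
    (left_mem_Icc.2 hab) hc), hwc]
  rcases min_cases δ (∫ s in a..b, w s) with ⟨hmin, -⟩ | ⟨hmin, -⟩ <;> rw [hmin] <;>
    nlinarith [(Nat.cast_nonneg q : (0 : ℝ) ≤ q)]

end RealIntervals

section BilinearControl

variable {E : Type*} [NormedAddCommGroup E] [NormedSpace ℝ E]

def wordSpan (A B : E →L[ℝ] E) (ψ₀ : E) : ℕ → Submodule ℝ E
  | 0 => Submodule.span ℝ {ψ₀}
  | n + 1 => wordSpan A B ψ₀ n ⊔ (wordSpan A B ψ₀ n).map (A : E →ₗ[ℝ] E) ⊔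
      (wordSpan A B ψ₀ n).map (B : E →ₗ[ℝ] E)

variable (A B : E →L[ℝ] E)

instance (ψ₀ : E) (n : ℕ) : FiniteDimensional ℝ (wordSpan A B ψ₀ n) := by
  induction n with
  | zero => rw [wordSpan]; infer_instance
  | succ n ih => rw [wordSpan]; infer_instance

variable {ψ₀ : E}

theorem mem_wordSpan_zero : ψ₀ ∈ wordSpan A B ψ₀ 0 :=
  Submodule.mem_span_singleton_self ψ₀

theorem add_smul_add_smul_mem_wordSpan {n : ℕ} {x : E} (hx : x ∈ wordSpan A B ψ₀ n) (c d : ℝ) :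
    x + c • A x + d • B x ∈ wordSpan A B ψ₀ (n + 1) :=
  add_mem (add_mem (Submodule.mem_sup_left (Submodule.mem_sup_left hx))
      (Submodule.smul_mem _ c (Submodule.mem_sup_left (Submodule.mem_sup_right
        (Submodule.mem_map_of_mem hx)))))
    (Submodule.smul_mem _ d (Submodule.mem_sup_right (Submodule.mem_map_of_mem hx)))

noncomputable def controlWeight (A B : E →L[ℝ] E) (u : ℝ → ℝ) (s : ℝ) : ℝ := ‖A‖ + |u s| * ‖B‖

/-- The Duhamel equation in two-point form, so that it restricts to subintervals. -/
def IsBilinearSolution (A B : E →L[ℝ] E) (u : ℝ → ℝ) (I : Set ℝ) (ψ : ℝ → E) : Prop :=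
  ContinuousOn ψ I ∧ ∀ s ∈ I, ∀ t ∈ I, ψ t - ψ s = ∫ τ in s..t, (A (ψ τ) + u τ • B (ψ τ))

def attainableSet (A B : E →L[ℝ] E) (ψ₀ : E) (m : ℝ) : Set E :=
  {x | ∃ (T : ℝ) (u : ℝ → ℝ) (ψ : ℝ → E), 0 ≤ T ∧ IntervalIntegrable u volume 0 T ∧
    ∫ s in 0..T, controlWeight A B u s ≤ m ∧ IsBilinearSolution A B u (Icc 0 T) ψ ∧
    ψ 0 = ψ₀ ∧ ψ T = x}

variable {A B} {u : ℝ → ℝ} {a b : ℝ}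

theorem controlWeight_nonneg (s : ℝ) : 0 ≤ controlWeight A B u s := by
  unfold controlWeight; positivity

theorem norm_apply_add_smul_apply_le (x : E) (c : ℝ) :
    ‖A x + c • B x‖ ≤ (‖A‖ + |c| * ‖B‖) * ‖x‖ :=
  calc ‖A x + c • B x‖ ≤ ‖A x‖ + |c| * ‖B x‖ := by
        simpa only [norm_smul, Real.norm_eq_abs] using norm_add_le (A x) (c • B x)
    _ ≤ ‖A‖ * ‖x‖ + |c| * (‖B‖ * ‖x‖) := by gcongr <;> apply ContinuousLinearMap.le_opNorm
    _ = (‖A‖ + |c| * ‖B‖) * ‖x‖ := by ring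

theorem IntervalIntegrable.controlWeight (hu : IntervalIntegrable u volume a b) :
    IntervalIntegrable (controlWeight A B u) volume a b :=
  intervalIntegrable_const.add (hu.abs.mul_const _)

theorem IntervalIntegrable.apply_add_smul_apply (hu : IntervalIntegrable u volume a b)
    {φ : ℝ → E} (hφ : ContinuousOn φ (uIcc a b)) :
    IntervalIntegrable (fun s => A (φ s) + u s • B (φ s)) volume a b :=
  (A.continuous.comp_continuousOn hφ).intervalIntegrable.add
    (hu.smul_continuousOn (B.continuous.comp_continuousOn hφ))

theorem norm_integral_apply_add_smul_apply_le (hab : a ≤ b)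
    (hu : IntervalIntegrable u volume a b) {φ : ℝ → E} {C : ℝ}
    (hφ : ∀ s ∈ Icc a b, ‖φ s‖ ≤ C) :
    ‖∫ s in a..b, (A (φ s) + u s • B (φ s))‖ ≤ C * ∫ s in a..b, controlWeight A B u s := by
  rw [← intervalIntegral.integral_const_mul]
  refine intervalIntegral.norm_integral_le_of_norm_le hab (ae_of_all _ fun s hs => ?_)
    (hu.controlWeight.const_mul C)
  calc ‖A (φ s) + u s • B (φ s)‖ ≤ controlWeight A B u s * ‖φ s‖ :=
        norm_apply_add_smul_apply_le _ _
    _ ≤ controlWeight A B u s * C := by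
        gcongr
        · exact controlWeight_nonneg s
        · exact hφ s (Ioc_subset_Icc_self hs)
    _ = C * controlWeight A B u s := mul_comm _ _

theorem integral_controlWeight_nonneg (hab : a ≤ b) : 0 ≤ ∫ s in a..b, controlWeight A B u s :=
  intervalIntegral.integral_nonneg hab fun s _ => controlWeight_nonneg s

theorem integral_apply_add_smul_apply_const [CompleteSpace E]
    (hu : IntervalIntegrable u volume a b) (y : E) :
    ∫ s in a..b, (A y + u s • B y) = (b - a) • A y + (∫ s in a..b, u s) • B y := by
  rw [intervalIntegral.integral_add intervalIntegrable_const
      (hu.smul_continuousOn continuousOn_const),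
    intervalIntegral.integral_const, intervalIntegral.integral_smul_const]

theorem IsBilinearSolution.mono {I J : Set ℝ} {ψ : ℝ → E} (hψ : IsBilinearSolution A B u I ψ)
    (hJI : J ⊆ I) : IsBilinearSolution A B u J ψ :=
  ⟨hψ.1.mono hJI, fun s hs t ht => hψ.2 s (hJI hs) t (hJI ht)⟩

theorem isBilinearSolution_of_eq_add_integral (hu : IntervalIntegrable u volume a b)
    {ψ : ℝ → E} (hψ : ContinuousOn ψ (Icc a b))
    (h : ∀ t ∈ Icc a b, ψ t = ψ₀ + ∫ s in a..t, (A (ψ s) + u s • B (ψ s))) :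
    IsBilinearSolution A B u (Icc a b) ψ := by
  refine ⟨hψ, fun s hs t ht => ?_⟩
  have hint : ∀ t ∈ Icc a b,
      IntervalIntegrable (fun s => A (ψ s) + u s • B (ψ s)) volume a t := fun t ht =>
    have ha : a ∈ Icc a b := left_mem_Icc.2 (ht.1.trans ht.2)
    (hu.mono_of_mem_Icc ha ht).apply_add_smul_apply (hψ.mono (uIcc_subset_Icc ha ht))
  rw [h t ht, h s hs, add_sub_add_left_eq_sub,
    intervalIntegral.integral_interval_sub_left (hint t ht) (hint s hs)]

variable {ψ : ℝ → E} {δ : ℝ}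

theorem IsBilinearSolution.norm_sub_left_le (hψ : IsBilinearSolution A B u (Icc a b) ψ)
    (hab : a ≤ b) (hu : IntervalIntegrable u volume a b)
    (hmass : ∫ s in a..b, controlWeight A B u s ≤ δ) (hδ : δ ≤ 1 / 2) {t : ℝ}
    (ht : t ∈ Icc a b) : ‖ψ t - ψ a‖ ≤ 2 * δ * ‖ψ a‖ := by
  have ha : a ∈ Icc a b := left_mem_Icc.2 hab
  obtain ⟨t₀, ht₀mem, ht₀⟩ := isCompact_Icc.exists_isMaxOn (nonempty_Icc.2 hab) hψ.1.norm
  have hgrowth : ∀ t ∈ Icc a b, ‖ψ t - ψ a‖ ≤ ‖ψ t₀‖ * δ := fun t ht =>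
    calc ‖ψ t - ψ a‖ = ‖∫ s in a..t, (A (ψ s) + u s • B (ψ s))‖ := by rw [hψ.2 a ha t ht]
      _ ≤ ‖ψ t₀‖ * ∫ s in a..t, controlWeight A B u s :=
          norm_integral_apply_add_smul_apply_le ht.1 (hu.mono_of_mem_Icc ha ht)
            fun s hs => ht₀ ⟨hs.1, hs.2.trans ht.2⟩
      _ ≤ ‖ψ t₀‖ * δ := by
          refine mul_le_mul_of_nonneg_left (le_trans ?_ hmass) (norm_nonneg _)
          exact intervalIntegral.integral_mono_interval le_rfl ht.1 ht.2
            (ae_of_all _ controlWeight_nonneg) hu.controlWeight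
  have hδ0 : 0 ≤ δ := (integral_controlWeight_nonneg hab).trans hmass
  -- `M := ‖ψ t₀‖` satisfies `M ≤ ‖ψ a‖ + δ M` with `δ ≤ 1/2`.
  have hmax : ‖ψ t₀‖ ≤ 2 * ‖ψ a‖ := by
    have := norm_le_norm_add_norm_sub' (ψ t₀) (ψ a)
    nlinarith [hgrowth t₀ ht₀mem, norm_nonneg (ψ t₀)]
  calc ‖ψ t - ψ a‖ ≤ ‖ψ t₀‖ * δ := hgrowth t ht
    _ ≤ 2 * ‖ψ a‖ * δ := by gcongr
    _ = 2 * δ * ‖ψ a‖ := by ring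

theorem IsBilinearSolution.norm_right_le (hψ : IsBilinearSolution A B u (Icc a b) ψ)
    (hab : a ≤ b) (hu : IntervalIntegrable u volume a b)
    (hmass : ∫ s in a..b, controlWeight A B u s ≤ δ) (hδ : δ ≤ 1 / 2) :
    ‖ψ b‖ ≤ (1 + 2 * δ) * ‖ψ a‖ :=
  calc ‖ψ b‖ ≤ ‖ψ a‖ + ‖ψ b - ψ a‖ := norm_le_norm_add_norm_sub' _ _
    _ ≤ ‖ψ a‖ + 2 * δ * ‖ψ a‖ := by
        gcongr; exact hψ.norm_sub_left_le hab hu hmass hδ (right_mem_Icc.2 hab)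
    _ = (1 + 2 * δ) * ‖ψ a‖ := by ring

theorem norm_add_integral_apply_add_smul_apply_le (hab : a ≤ b)
    (hu : IntervalIntegrable u volume a b) (hmass : ∫ s in a..b, controlWeight A B u s ≤ δ)
    (x : E) : ‖x + ∫ s in a..b, (A x + u s • B x)‖ ≤ (1 + δ) * ‖x‖ :=
  calc ‖x + ∫ s in a..b, (A x + u s • B x)‖
      ≤ ‖x‖ + ‖x‖ * ∫ s in a..b, controlWeight A B u s :=
        (norm_add_le _ _).trans (by
          gcongr
          exact norm_integral_apply_add_smul_apply_le hab hu fun _ _ => le_rfl)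
    _ ≤ ‖x‖ + ‖x‖ * δ := by gcongr
    _ = (1 + δ) * ‖x‖ := by ring

theorem IsBilinearSolution.norm_sub_euler_le (hψ : IsBilinearSolution A B u (Icc a b) ψ)
    (hab : a ≤ b) (hu : IntervalIntegrable u volume a b)
    (hmass : ∫ s in a..b, controlWeight A B u s ≤ δ) (hδ : δ ≤ 1 / 2) (x : E) :
    ‖ψ b - (x + ∫ s in a..b, (A x + u s • B x))‖ ≤
      (1 + δ) * ‖ψ a - x‖ + 2 * δ ^ 2 * ‖ψ a‖ := by
  have ha : a ∈ Icc a b := left_mem_Icc.2 hab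
  have hδ0 : 0 ≤ δ := (integral_controlWeight_nonneg hab).trans hmass
  have hsplit : ψ b - (x + ∫ s in a..b, (A x + u s • B x)) =
      (ψ a - x) + ∫ s in a..b, (A (ψ s - x) + u s • B (ψ s - x)) := by
    have hlin : ∫ s in a..b, (A (ψ s - x) + u s • B (ψ s - x)) =
        (∫ s in a..b, (A (ψ s) + u s • B (ψ s))) - ∫ s in a..b, (A x + u s • B x) := by
      rw [← intervalIntegral.integral_sub (hu.apply_add_smul_apply (uIcc_of_le hab ▸ hψ.1))
        (hu.apply_add_smul_apply continuousOn_const)]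
      congr 1 with s
      simp only [map_sub, smul_sub]
      abel
    rw [hlin, ← hψ.2 a ha b (right_mem_Icc.2 hab)]
    abel
  have hclose : ∀ s ∈ Icc a b, ‖ψ s - x‖ ≤ ‖ψ a - x‖ + 2 * δ * ‖ψ a‖ := fun s hs =>
    calc ‖ψ s - x‖ = ‖(ψ a - x) + (ψ s - ψ a)‖ := by congr 1; abel
      _ ≤ ‖ψ a - x‖ + ‖ψ s - ψ a‖ := norm_add_le _ _
      _ ≤ ‖ψ a - x‖ + 2 * δ * ‖ψ a‖ := by gcongr; exact hψ.norm_sub_left_le hab hu hmass hδ hs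
  calc ‖ψ b - (x + ∫ s in a..b, (A x + u s • B x))‖
      ≤ ‖ψ a - x‖ + (‖ψ a - x‖ + 2 * δ * ‖ψ a‖) * ∫ s in a..b, controlWeight A B u s := by
        rw [hsplit]
        refine (norm_add_le _ _).trans ?_
        gcongr
        exact norm_integral_apply_add_smul_apply_le hab hu hclose
    _ ≤ ‖ψ a - x‖ + (‖ψ a - x‖ + 2 * δ * ‖ψ a‖) * δ := by gcongr
    _ = (1 + δ) * ‖ψ a - x‖ + 2 * δ ^ 2 * ‖ψ a‖ := by ring

theorem exists_mem_wordSpan_norm_sub_le [CompleteSpace E] (hδ0 : 0 ≤ δ) (hδ : δ ≤ 1 / 2)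
    {q : ℕ} (hab : a ≤ b) (hu : IntervalIntegrable u volume a b)
    (hψ : IsBilinearSolution A B u (Icc a b) ψ)
    (hmass : ∫ s in a..b, controlWeight A B u s ≤ q * δ) {j : ℕ} {x : E}
    (hx : x ∈ wordSpan A B ψ₀ j) :
    ∃ y ∈ wordSpan A B ψ₀ (j + q), ‖y‖ ≤ (1 + 2 * δ) ^ q * ‖x‖ ∧
      ‖ψ b - y‖ ≤ (1 + 2 * δ) ^ q * (‖ψ a - x‖ + 2 * q * δ ^ 2 * ‖ψ a‖) := by
  induction q generalizing a j x with
  | zero =>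
    refine ⟨x, hx, by simp, ?_⟩
    have hψb := hψ.norm_sub_left_le hab hu (by simpa using hmass) (by norm_num)
      (right_mem_Icc.2 hab)
    calc ‖ψ b - x‖ ≤ ‖ψ b - ψ a‖ + ‖ψ a - x‖ := norm_sub_le_norm_sub_add_norm_sub _ _ _
      _ ≤ _ := by simpa using hψb
  | succ q ih =>
    have ha : a ∈ Icc a b := left_mem_Icc.2 hab
    have hb : b ∈ Icc a b := right_mem_Icc.2 hab
    obtain ⟨c, hc, hmass_ac, hmass_cb⟩ := exists_mem_Icc_integral_le_and_integral_le hab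
      hu.controlWeight (fun s _ => controlWeight_nonneg s) hδ0 (by exact_mod_cast hmass)
    have hu_ac := hu.mono_of_mem_Icc ha hc
    have hψ_ac := hψ.mono (Icc_subset_Icc le_rfl hc.2)
    set x₁ := x + ∫ s in a..c, (A x + u s • B x) with hx₁_def
    have hx₁ : x₁ ∈ wordSpan A B ψ₀ (j + 1) := by
      rw [hx₁_def, integral_apply_add_smul_apply_const hu_ac, ← add_assoc]
      exact add_smul_add_smul_mem_wordSpan A B hx _ _
    have hx₁_norm := norm_add_integral_apply_add_smul_apply_le hc.1 hu_ac hmass_ac x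
    have he₁ := hψ_ac.norm_sub_euler_le hc.1 hu_ac hmass_ac hδ x
    have hψc := hψ_ac.norm_right_le hc.1 hu_ac hmass_ac hδ
    obtain ⟨y, hy, hy_norm, hy_err⟩ := ih hc.2 (hu.mono_of_mem_Icc hc hb)
      (hψ.mono (Icc_subset_Icc hc.1 le_rfl)) hmass_cb hx₁
    refine ⟨y, by rwa [add_right_comm, add_assoc] at hy, ?_, ?_⟩
    · calc ‖y‖ ≤ (1 + 2 * δ) ^ q * ((1 + δ) * ‖x‖) := hy_norm.trans (by gcongr)
        _ ≤ (1 + 2 * δ) ^ q * ((1 + 2 * δ) * ‖x‖) := by gcongr; linarith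
        _ = (1 + 2 * δ) ^ (q + 1) * ‖x‖ := by ring
    · have hρ : 1 ≤ 1 + 2 * δ := by linarith
      calc ‖ψ b - y‖ ≤ (1 + 2 * δ) ^ q * (‖ψ c - x₁‖ + 2 * q * δ ^ 2 * ‖ψ c‖) := hy_err
        _ ≤ (1 + 2 * δ) ^ q * (((1 + δ) * ‖ψ a - x‖ + 2 * δ ^ 2 * ‖ψ a‖) +
              2 * q * δ ^ 2 * ((1 + 2 * δ) * ‖ψ a‖)) := by gcongr
        _ ≤ (1 + 2 * δ) ^ q * ((1 + 2 * δ) *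
              (‖ψ a - x‖ + 2 * ↑(q + 1) * δ ^ 2 * ‖ψ a‖)) := by
            gcongr
            push_cast
            nlinarith [mul_nonneg hδ0 (norm_nonneg (ψ a - x)),
              mul_nonneg (pow_nonneg hδ0 3) (norm_nonneg (ψ a))]
        _ = (1 + 2 * δ) ^ (q + 1) * (‖ψ a - x‖ + 2 * ↑(q + 1) * δ ^ 2 * ‖ψ a‖) := by ring

theorem totallyBounded_attainableSet [CompleteSpace E] (ψ₀ : E) (m : ℝ) :
    TotallyBounded (attainableSet A B ψ₀ m) := by
  refine totallyBounded_of_forall_exists_finiteDimensional fun ε hε => ?_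
  set M := |m| + 1
  have hM : 0 < M := by positivity
  obtain ⟨q, hq⟩ := exists_nat_gt (max (2 * M) (2 * M ^ 2 * Real.exp (2 * M) * ‖ψ₀‖ / ε))
  have hqM : 2 * M < q := (le_max_left _ _).trans_lt hq
  have hqε : 2 * M ^ 2 * Real.exp (2 * M) * ‖ψ₀‖ < ε * q := by
    rw [← div_lt_iff₀' hε]; exact (le_max_right _ _).trans_lt hq
  have hq0 : (0 : ℝ) < q := by linarith
  have hδ : M / q ≤ 1 / 2 := by rw [div_le_iff₀ hq0]; linarith
  refine ⟨wordSpan A B ψ₀ q, inferInstance, Real.exp (2 * M) * ‖ψ₀‖, ?_⟩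
  rintro x ⟨T, u, ψ, hT, hu, hmass, hψ, rfl, rfl⟩
  obtain ⟨y, hy, hy_norm, hy_err⟩ :=
    exists_mem_wordSpan_norm_sub_le (by positivity) hδ (q := q) hT hu hψ (by rw [mul_div_cancel₀ _ hq0.ne']; linarith [le_abs_self m])
      (mem_wordSpan_zero A B)
  have hρ := one_add_two_mul_div_pow_le_exp hM.le q
  refine ⟨y, by simpa using hy, hy_norm.trans (by gcongr), ?_⟩
  rw [dist_eq_norm]
  calc ‖ψ T - y‖ ≤ (1 + 2 * (M / q)) ^ q * (‖ψ 0 - ψ 0‖ + 2 * q * (M / q) ^ 2 * ‖ψ 0‖) := hy_err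
    _ = (1 + 2 * (M / q)) ^ q * (2 * M ^ 2 * ‖ψ 0‖) / q := by
        rw [sub_self, norm_zero, zero_add]; field_simp
    _ ≤ Real.exp (2 * M) * (2 * M ^ 2 * ‖ψ 0‖) / q := by gcongr
    _ ≤ ε := by rw [div_le_iff₀ hq0]; linarith

end BilinearControl

theorem ball_marsden_slemrod_obstruction_general
    {H : Type*} [NormedAddCommGroup H] [InnerProductSpace ℂ H] [CompleteSpace H]
    (hinf : ¬ FiniteDimensional ℂ H)
    (A B : H →L[ℂ] H) (ψ₀ : H) (r : ℝ) (hr : 1 < r) :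
    let S : Set H := {x : H | ∃ T : ℝ, 0 ≤ T ∧ ∃ u : ℝ → ℝ,
      MeasureTheory.MemLp u (ENNReal.ofReal r) (volume.restrict (Set.Icc (0:ℝ) T)) ∧
      ∃ ψ : ℝ → H, ContinuousOn ψ (Set.Icc 0 T) ∧ ψ 0 = ψ₀ ∧
        (∀ t ∈ Set.Icc (0:ℝ) T,
          ψ t = ψ₀ + ∫ s in (0:ℝ)..t, (A (ψ s) + u s • B (ψ s))) ∧
        ψ T = x}
    (∃ F : ℕ → Set H, (∀ n, IsClosed (F n) ∧ interior (F n) = ∅) ∧ S ⊆ ⋃ n, F n) ∧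
      interior S = ∅ := by
  intro S
  let F : ℕ → Set H := fun n ↦
    closure (attainableSet (A.restrictScalars ℝ) (B.restrictScalars ℝ) ψ₀ n)
  have hF : ∀ n, IsClosed (F n) ∧ interior (F n) = ∅ := fun n =>
    ⟨isClosed_closure, IsCompact.interior_eq_empty_of_not_finiteDimensional ℂ hinf <|
      (totallyBounded_attainableSet ψ₀ n).closure.isCompact_of_isClosed isClosed_closure⟩
  have hSF : S ⊆ ⋃ n, F n := by
    rintro x ⟨T, hT, u, hu, ψ, hψ, hψ0, hsol, rfl⟩
    have hu₁ : IntervalIntegrable u volume 0 T :=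
      (intervalIntegrable_iff_integrableOn_Icc_of_le hT).2 <| memLp_one_iff_integrable.1 <|
        hu.mono_exponent (ENNReal.one_le_ofReal.2 hr.le)
    exact mem_iUnion.2 ⟨_, subset_closure ⟨T, u, ψ, hT, hu₁, Nat.le_ceil _,
      isBilinearSolution_of_eq_add_integral hu₁ hψ hsol, hψ0, rfl⟩⟩
  exact ⟨⟨F, hF, hSF⟩, interior_eq_empty_of_subset_iUnion_isClosed hF hSF⟩

/-- Ball–Marsden–Slemrod / Turinici obstruction: for a bilinear system
`dψ/dt = (A + u(t)B)ψ` in an infinite-dimensional separable complex Hilbert space,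
with bounded `A`, `B`, the attainable set from `ψ₀` with `L^r` controls (`r > 1`) is
contained in a countable union of closed sets with empty interior; in particular it
has empty interior. -/
theorem ball_marsden_slemrod_obstruction
    {H : Type*} [NormedAddCommGroup H] [InnerProductSpace ℂ H] [CompleteSpace H]
    [TopologicalSpace.SeparableSpace H] (hinf : ¬ FiniteDimensional ℂ H)
    (A B : H →L[ℂ] H) (ψ₀ : H) (r : ℝ) (hr : 1 < r) :
    let S : Set H := {x : H | ∃ T : ℝ, 0 ≤ T ∧ ∃ u : ℝ → ℝ,
      MeasureTheory.MemLp u (ENNReal.ofReal r) (volume.restrict (Set.Icc (0:ℝ) T)) ∧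
      ∃ ψ : ℝ → H, ContinuousOn ψ (Set.Icc 0 T) ∧ ψ 0 = ψ₀ ∧
        (∀ t ∈ Set.Icc (0:ℝ) T,
          ψ t = ψ₀ + ∫ s in (0:ℝ)..t, (A (ψ s) + u s • B (ψ s))) ∧
        ψ T = x}
    (∃ F : ℕ → Set H, (∀ n, IsClosed (F n) ∧ interior (F n) = ∅) ∧ S ⊆ ⋃ n, F n) ∧
      interior S = ∅ :=
  ball_marsden_slemrod_obstruction_general hinf A B ψ₀ r hr
end

section
/- Let H be a complex Hilbert space and let A, B : H → H be bounded skew-adjoint operators (A* = −A and B* = −B). Then for every u ∈ ℝ, every t ≥ 0, and every ψ ∈ H with ‖ψ‖ = 1, one has ‖A(exp(t(A + u·B))ψ)‖ ≤ ‖Aψ‖ + 2|u|·‖B‖, where exp denotes the operator exponential. -/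
/-!
`e^{t(A+uB)}` is unitary, since `t(A+uB)` is skew-adjoint, and it commutes with `A + uB`. Hence
its commutator with `A` equals `u` times its commutator with `B`, which has norm at most
`2|u|‖B‖` on unit vectors.
-/

open ContinuousLinearMap

theorem ContinuousLinearMap.norm_apply_apply_le_of_commute_add_smul
    {𝕜 E : Type*} [NontriviallyNormedField 𝕜] [NormedAddCommGroup E] [NormedSpace 𝕜 E]
    {U A B : E →L[𝕜] E} {c : 𝕜} (hU : ∀ x, ‖U x‖ = ‖x‖) (hcomm : Commute U (A + c • B))
    (x : E) : ‖A (U x)‖ ≤ ‖A x‖ + 2 * ‖c‖ * ‖B‖ * ‖x‖ := by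
  have hAU : A (U x) = U (A x) + c • U (B x) - c • B (U x) := by
    have h : (U * (A + c • B)) x = ((A + c • B) * U) x := by rw [hcomm.eq]
    simp only [mul_apply_eq_comp, add_apply, smul_apply, map_add, map_smul] at h
    rw [h, add_sub_cancel_right]
  have hBx : ‖B x‖ ≤ ‖B‖ * ‖x‖ := B.le_opNorm x
  have hBUx : ‖B (U x)‖ ≤ ‖B‖ * ‖x‖ := hU x ▸ B.le_opNorm (U x)
  calc ‖A (U x)‖ ≤ ‖U (A x)‖ + ‖c • U (B x)‖ + ‖c • B (U x)‖ := by
        rw [hAU]; exact norm_sub_le_of_le (norm_add_le _ _) le_rfl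
    _ ≤ ‖A x‖ + ‖c‖ * (‖B‖ * ‖x‖) + ‖c‖ * (‖B‖ * ‖x‖) := by
        rw [norm_smul, norm_smul, hU, hU]
        gcongr
    _ = ‖A x‖ + 2 * ‖c‖ * ‖B‖ * ‖x‖ := by ring

/-- Energy growth bound along the propagator: for bounded skew-adjoint operators
`A`, `B` on a complex Hilbert space, every `u ∈ ℝ`, `t ≥ 0`, and unit vector `ψ`,
`‖A e^{t(A+uB)} ψ‖ ≤ ‖Aψ‖ + 2|u|·‖B‖`. -/
theorem energy_growth_bound
    {H : Type*} [NormedAddCommGroup H] [InnerProductSpace ℂ H] [CompleteSpace H]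
    (A B : H →L[ℂ] H) (hA : ContinuousLinearMap.adjoint A = -A)
    (hB : ContinuousLinearMap.adjoint B = -B) :
    ∀ (u : ℝ) (t : ℝ), 0 ≤ t → ∀ ψ : H, ‖ψ‖ = 1 →
      ‖A (NormedSpace.exp ((t : ℂ) • (A + (u : ℂ) • B)) ψ)‖
        ≤ ‖A ψ‖ + 2 * |u| * ‖B‖ := by
  intro u t _ ψ hψ
  have hA' : A ∈ skewAdjoint (H →L[ℂ] H) := skewAdjoint.mem_iff.mpr (by rw [star_eq_adjoint, hA])
  have hB' : B ∈ skewAdjoint (H →L[ℂ] H) := skewAdjoint.mem_iff.mpr (by rw [star_eq_adjoint, hB])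
  have hskew : (t : ℂ) • (A + (u : ℂ) • B) ∈ skewAdjoint (H →L[ℂ] H) := by
    simp only [Complex.coe_smul]
    exact skewAdjoint.smul_mem t (add_mem hA' (skewAdjoint.smul_mem u hB'))
  let _ : NormedAlgebra ℚ (H →L[ℂ] H) := NormedAlgebra.restrictScalars ℚ ℂ _
  have hunitary := NormedSpace.exp_mem_unitary_of_mem_skewAdjoint hskew
  have hcomm : Commute (NormedSpace.exp ((t : ℂ) • (A + (u : ℂ) • B))) (A + (u : ℂ) • B) :=
    ((Commute.refl _).smul_left _).exp_left
  simpa [hψ] using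
    norm_apply_apply_le_of_commute_add_smul (norm_map_of_mem_unitary hunitary) hcomm ψ
end

section
/- Let H be a complex Hilbert space, A, B : H → H bounded skew-adjoint operators, u : ℝ → ℝ continuous, and ψ : ℝ → H differentiable with ψ'(t) = A ψ(t) + u(t)·B ψ(t) for all t and ‖ψ(0)‖ = 1. Let φ ∈ H and λ ∈ ℝ satisfy Aφ = iλ·φ. Then for every t ≥ 0, | |⟨φ, ψ(t)⟩| − |⟨φ, ψ(0)⟩| | ≤ ‖Bφ‖ · ∫₀^t |u(s)| ds. -/
/-!
Since `A + u(t) B` is skew-adjoint, `‖ψ(t)‖ = 1` for all `t`. The coordinate `g(t) = ⟨φ, ψ(t)⟩`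
satisfies `g' = iλ g + u ⟨φ, Bψ⟩`, so in the rotating frame `e^{-iλt} g(t)`, which has the same
modulus as `g(t)`, only the control term remains; its size is
`|u| |⟨φ, Bψ⟩| = |u| |⟨Bφ, ψ⟩| ≤ |u| ‖Bφ‖`, and the fundamental theorem of calculus concludes.
-/

open ContinuousLinearMap MeasureTheory intervalIntegral

section SkewAdjoint

variable {𝕜 E : Type*} [RCLike 𝕜] [NormedAddCommGroup E] [InnerProductSpace 𝕜 E] [CompleteSpace E]
  {T : E →L[𝕜] E}

theorem mem_skewAdjoint_of_adjoint_eq_neg (hT : adjoint T = -T) :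
    T ∈ skewAdjoint (E →L[𝕜] E) :=
  skewAdjoint.mem_iff.2 (by rw [star_eq_adjoint, hT])

theorem inner_apply_eq_neg_inner_of_mem_skewAdjoint (hT : T ∈ skewAdjoint (E →L[𝕜] E))
    (x y : E) : inner 𝕜 x (T y) = -inner 𝕜 (T x) y := by
  rw [← adjoint_inner_left, ← star_eq_adjoint, skewAdjoint.mem_iff.1 hT, neg_apply, inner_neg_left]

theorem re_inner_apply_self_of_mem_skewAdjoint (hT : T ∈ skewAdjoint (E →L[𝕜] E)) (x : E) :
    RCLike.re (inner 𝕜 x (T x)) = 0 := by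
  have h := congrArg RCLike.re (inner_apply_eq_neg_inner_of_mem_skewAdjoint hT x x)
  rw [map_neg, inner_re_symm (T x)] at h
  linarith

theorem norm_inner_apply_le_of_mem_skewAdjoint (hT : T ∈ skewAdjoint (E →L[𝕜] E)) (x y : E) :
    ‖inner 𝕜 x (T y)‖ ≤ ‖T x‖ * ‖y‖ := by
  rw [inner_apply_eq_neg_inner_of_mem_skewAdjoint hT, norm_neg]
  exact norm_inner_le_norm _ _

theorem inner_apply_of_mem_skewAdjoint_of_apply_eq_smul (hT : T ∈ skewAdjoint (E →L[𝕜] E))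
    {φ : E} {μ : 𝕜} (hφ : T φ = μ • φ) (x : E) :
    inner 𝕜 φ (T x) = -(starRingEnd 𝕜 μ) * inner 𝕜 φ x := by
  rw [inner_apply_eq_neg_inner_of_mem_skewAdjoint hT, hφ, inner_smul_left, neg_mul]

end SkewAdjoint

theorem norm_eq_of_hasDerivAt_of_re_inner_eq_zero {𝕜 E : Type*} [RCLike 𝕜]
    [NormedAddCommGroup E] [InnerProductSpace 𝕜 E] [NormedSpace ℝ E] {ψ v : ℝ → E}
    (hψ : ∀ t, HasDerivAt ψ (v t) t) (hv : ∀ t, RCLike.re (inner 𝕜 (ψ t) (v t)) = 0)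
    (s t : ℝ) : ‖ψ s‖ = ‖ψ t‖ := by
  have hsq : ∀ r, HasDerivAt (fun r => inner 𝕜 (ψ r) (ψ r)) 0 r := fun r => by
    convert (hψ r).inner 𝕜 (hψ r) using 1
    rw [← inner_conj_symm (v r) (ψ r), RCLike.add_conj, hv r, RCLike.ofReal_zero, mul_zero]
  have hconst := is_const_of_deriv_eq_zero (fun r => (hsq r).differentiableAt)
    (fun r => (hsq r).deriv) s t
  rw [inner_self_eq_norm_sq_to_K, inner_self_eq_norm_sq_to_K] at hconst
  exact (sq_eq_sq₀ (norm_nonneg _) (norm_nonneg _)).1 (by exact_mod_cast hconst)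

theorem hasDerivAt_cexp_neg_mul_mul {g : ℝ → ℂ} {c w : ℂ} {s : ℝ}
    (hg : HasDerivAt g (c * g s + w) s) :
    HasDerivAt (fun r : ℝ => Complex.exp (-(c * r)) * g r) (Complex.exp (-(c * s)) * w) s := by
  have he : HasDerivAt (fun r : ℝ => Complex.exp (-(c * r))) (-c * Complex.exp (-(c * s))) s := by
    simpa [mul_comm] using ((Complex.ofRealCLM.hasDerivAt (x := s)).const_mul c).neg.cexp
  exact (he.mul hg).congr_deriv (by ring)

theorem abs_norm_sub_norm_le_integral_norm_of_hasDerivAt {g w : ℝ → ℂ} {c : ℂ} (hc : c.re = 0)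
    (hg : ∀ s, HasDerivAt g (c * g s + w s) s) {a b : ℝ} (hab : a ≤ b)
    (hw : IntervalIntegrable w volume a b) :
    |‖g b‖ - ‖g a‖| ≤ ∫ s in a..b, ‖w s‖ := by
  set h : ℝ → ℂ := fun r => Complex.exp (-(c * r)) * g r
  have hexp : ∀ r : ℝ, ‖Complex.exp (-(c * r))‖ = 1 := fun r => by
    simp [Complex.norm_exp, hc]
  have hftc : h b - h a = ∫ s in a..b, Complex.exp (-(c * s)) * w s :=
    (integral_eq_sub_of_hasDerivAt (fun s _ => hasDerivAt_cexp_neg_mul_mul (hg s))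
      (hw.continuousOn_mul (by fun_prop))).symm
  calc |‖g b‖ - ‖g a‖| = |‖h b‖ - ‖h a‖| := by simp only [h, norm_mul, hexp, one_mul]
    _ ≤ ‖h b - h a‖ := abs_norm_sub_norm_le _ _
    _ ≤ ∫ s in a..b, ‖Complex.exp (-(c * s)) * w s‖ := hftc ▸ norm_integral_le_integral_norm hab
    _ = ∫ s in a..b, ‖w s‖ := by simp only [norm_mul, hexp, one_mul]

/-- Lower bound on the `L¹` norm of the control needed to induce a transfer: along a
solution of `ψ' = (A + u(t)B)ψ` with `‖ψ(0)‖ = 1`, if `Aφ = iλφ`, then for `t ≥ 0`,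
`| |⟨φ, ψ(t)⟩| − |⟨φ, ψ(0)⟩| | ≤ ‖Bφ‖·∫₀^t |u(s)| ds`. -/
theorem control_L1_lower_bound
    {H : Type*} [NormedAddCommGroup H] [InnerProductSpace ℂ H] [CompleteSpace H]
    (A B : H →L[ℂ] H) (hA : ContinuousLinearMap.adjoint A = -A)
    (hB : ContinuousLinearMap.adjoint B = -B)
    (u : ℝ → ℝ) (hu : Continuous u) (ψ : ℝ → H)
    (hψ : ∀ t : ℝ, HasDerivAt ψ (A (ψ t) + u t • B (ψ t)) t)
    (hψ0 : ‖ψ 0‖ = 1) (φ : H) (lam : ℝ)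
    (hφ : A φ = (Complex.I * (lam : ℂ)) • φ) :
    ∀ t : ℝ, 0 ≤ t →
      |‖(inner ℂ φ (ψ t) : ℂ)‖ - ‖(inner ℂ φ (ψ 0) : ℂ)‖|
        ≤ ‖B φ‖ * ∫ s in (0:ℝ)..t, |u s| := by
  intro t ht
  have hA' := mem_skewAdjoint_of_adjoint_eq_neg hA
  have hB' := mem_skewAdjoint_of_adjoint_eq_neg hB
  have hnorm : ∀ s, ‖ψ s‖ = 1 := fun s => hψ0 ▸ norm_eq_of_hasDerivAt_of_re_inner_eq_zero hψ
    (fun r => re_inner_apply_self_of_mem_skewAdjoint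
      (add_mem hA' (skewAdjoint.smul_mem (u r) hB')) (ψ r)) s 0
  have hcoord : ∀ s, HasDerivAt (fun r => inner ℂ φ (ψ r))
      (Complex.I * lam * inner ℂ φ (ψ s) + u s * inner ℂ φ (B (ψ s))) s := fun s => by
    refine ((hasDerivAt_const s φ).inner ℂ (hψ s)).congr_deriv ?_
    rw [inner_add_right, ← Complex.coe_smul, inner_smul_right,
      inner_apply_of_mem_skewAdjoint_of_apply_eq_smul hA' hφ]
    simp
  have hw : Continuous fun s => (u s : ℂ) * inner ℂ φ (B (ψ s)) := by
    have : Continuous ψ := continuous_iff_continuousAt.2 fun s => (hψ s).continuousAt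
    fun_prop
  calc _ ≤ ∫ s in (0:ℝ)..t, ‖(u s : ℂ) * inner ℂ φ (B (ψ s))‖ :=
        abs_norm_sub_norm_le_integral_norm_of_hasDerivAt (by simp) hcoord ht
          (hw.intervalIntegrable 0 t)
    _ ≤ ∫ s in (0:ℝ)..t, ‖B φ‖ * |u s| := by
        refine integral_mono_on ht (hw.norm.intervalIntegrable 0 t)
          ((continuous_const.mul hu.abs).intervalIntegrable 0 t) fun s _ => ?_
        rw [norm_mul, Complex.norm_real, Real.norm_eq_abs, mul_comm]
        gcongr
        simpa [hnorm s] using norm_inner_apply_le_of_mem_skewAdjoint hB' φ (ψ s)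
    _ = ‖B φ‖ * ∫ s in (0:ℝ)..t, |u s| := integral_const_mul _ _
end

section
/- Let H be a complex Hilbert space, A, B : H → H bounded skew-adjoint operators, and P : H → H a bounded self-adjoint operator with Re⟨Pψ, ψ⟩ ≥ 0 for all ψ ∈ H and P∘A = A∘P. Let C ≥ 0 satisfy |Re⟨Pψ, Bψ⟩| ≤ C·Re⟨Pψ, ψ⟩ for all ψ ∈ H. Let u : ℝ → ℝ be continuous and ψ : ℝ → H differentiable with ψ'(t) = A ψ(t) + u(t)·B ψ(t) for all t. Then for every T ≥ 0, Re⟨P ψ(T), ψ(T)⟩ ≤ exp(2C·∫₀^T |u(s)| ds) · Re⟨P ψ(0), ψ(0)⟩. -/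
/-!
Along a solution, the energy `Re⟨Pψ(t), ψ(t)⟩` has derivative `2 u(t) Re⟨Pψ(t), Bψ(t)⟩`: the
drift `A` contributes nothing, because it is skew-adjoint and commutes with `P`. The coupling
bound turns this into `E' ≤ 2C|u| E`, which Grönwall's argument with the integrating factor
`exp(-2C ∫₀ᵗ |u|)` integrates.
-/

open scoped InnerProductSpace

theorem le_exp_sub_mul_of_hasDerivAt_le_mul {f f' g g' : ℝ → ℝ}
    (hf : ∀ t, HasDerivAt f (f' t) t) (hg : ∀ t, HasDerivAt g (g' t) t)
    (hle : ∀ t, f' t ≤ g' t * f t) {a b : ℝ} (hab : a ≤ b) :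
    f b ≤ Real.exp (g b - g a) * f a := by
  have hanti : Antitone fun t => f t * Real.exp (-g t) := by
    refine antitone_of_hasDerivAt_nonpos (fun t => (hf t).mul (hg t).neg.exp) fun t => ?_
    have hfg := hle t
    have hexp := Real.exp_pos (-g t)
    simp only [Pi.zero_apply, Pi.neg_apply]
    nlinarith
  calc f b = f b * Real.exp (-g b) * Real.exp (g b) := by
        rw [mul_assoc, ← Real.exp_add, neg_add_cancel, Real.exp_zero, mul_one]
    _ ≤ f a * Real.exp (-g a) * Real.exp (g b) :=
        mul_le_mul_of_nonneg_right (hanti hab) (Real.exp_pos _).le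
    _ = Real.exp (g b - g a) * f a := by rw [sub_eq_add_neg, Real.exp_add]; ring

section

variable {𝕜 E : Type*} [RCLike 𝕜] [NormedAddCommGroup E] [InnerProductSpace 𝕜 E]
  [CompleteSpace E] {P A : E →L[𝕜] E}

theorem IsSelfAdjoint.re_inner_map_skewAdjoint_eq_zero (hP : IsSelfAdjoint P)
    (hA : A ∈ skewAdjoint (E →L[𝕜] E)) (hPA : Commute P A) (x : E) :
    RCLike.re ⟪P x, A x⟫_𝕜 = 0 := by
  have hA' : ContinuousLinearMap.adjoint A = -A := by
    rw [← ContinuousLinearMap.star_eq_adjoint]; exact skewAdjoint.mem_iff.1 hA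
  have h : ⟪P x, A x⟫_𝕜 = -(starRingEnd 𝕜) ⟪P x, A x⟫_𝕜 := by
    calc ⟪P x, A x⟫_𝕜 = ⟪ContinuousLinearMap.adjoint A (P x), x⟫_𝕜 :=
          (ContinuousLinearMap.adjoint_inner_left A x (P x)).symm
      _ = -⟪P (A x), x⟫_𝕜 := by
        have hPAx : P (A x) = A (P x) := DFunLike.congr_fun hPA.eq x
        rw [hA', neg_apply, inner_neg_left, hPAx]
      _ = -⟪A x, P x⟫_𝕜 := congrArg Neg.neg (hP.isSymmetric (A x) x)
      _ = -(starRingEnd 𝕜) ⟪P x, A x⟫_𝕜 := by rw [inner_conj_symm]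
  have := congrArg RCLike.re h
  rw [map_neg, RCLike.conj_re] at this
  linarith

variable [NormedSpace ℝ E] [IsScalarTower ℝ 𝕜 E]

theorem IsSelfAdjoint.hasDerivAt_re_inner_map_self (hP : IsSelfAdjoint P) {ψ : ℝ → E}
    {ψ' : E} {t : ℝ} (hψ : HasDerivAt ψ ψ' t) :
    HasDerivAt (fun s => RCLike.re ⟪P (ψ s), ψ s⟫_𝕜) (2 * RCLike.re ⟪P (ψ t), ψ'⟫_𝕜) t := by
  refine ((RCLike.reCLM (K := 𝕜)).hasFDerivAt.comp_hasDerivAt t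
    ((P.restrictScalars ℝ).hasFDerivAt.comp_hasDerivAt t hψ |>.inner 𝕜 hψ)).congr_deriv ?_
  have hsymm : ⟪P ψ', ψ t⟫_𝕜 = ⟪ψ', P (ψ t)⟫_𝕜 := hP.isSymmetric ψ' (ψ t)
  simp only [RCLike.reCLM_apply, Function.comp_apply, ContinuousLinearMap.coe_restrictScalars',
    map_add, hsymm]
  rw [← inner_conj_symm (P (ψ t)), RCLike.conj_re, two_mul]

theorem IsSelfAdjoint.hasDerivAt_re_inner_map_self_of_skewAdjoint_add_smul
    (hP : IsSelfAdjoint P) (hA : A ∈ skewAdjoint (E →L[𝕜] E)) (hPA : Commute P A)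
    (B : E →L[𝕜] E) {ψ : ℝ → E} {c t : ℝ} (hψ : HasDerivAt ψ (A (ψ t) + c • B (ψ t)) t) :
    HasDerivAt (fun s => RCLike.re ⟪P (ψ s), ψ s⟫_𝕜)
      (2 * c * RCLike.re ⟪P (ψ t), B (ψ t)⟫_𝕜) t := by
  refine (hP.hasDerivAt_re_inner_map_self hψ).congr_deriv ?_
  rw [inner_add_right, map_add, hP.re_inner_map_skewAdjoint_eq_zero hA hPA,
    RCLike.real_smul_eq_coe_smul (K := 𝕜), inner_smul_real_right, RCLike.smul_re]
  ring

end

theorem weak_coupling_growth_bound_general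
    {H : Type*} [NormedAddCommGroup H] [InnerProductSpace ℂ H] [CompleteSpace H]
    (A B P : H →L[ℂ] H) (hA : ContinuousLinearMap.adjoint A = -A)
    (hP : ContinuousLinearMap.adjoint P = P)
    (hPA : P ∘L A = A ∘L P)
    (C : ℝ)
    (hCbound : ∀ ψ : H, |(inner ℂ (P ψ) (B ψ) : ℂ).re| ≤ C * (inner ℂ (P ψ) ψ : ℂ).re)
    (u : ℝ → ℝ) (hu : Continuous u) (ψ : ℝ → H)
    (hψ : ∀ t : ℝ, HasDerivAt ψ (A (ψ t) + u t • B (ψ t)) t) :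
    ∀ T : ℝ, 0 ≤ T →
      (inner ℂ (P (ψ T)) (ψ T) : ℂ).re
        ≤ Real.exp (2 * C * ∫ s in (0:ℝ)..T, |u s|) * (inner ℂ (P (ψ 0)) (ψ 0) : ℂ).re := by
  intro T hT
  have hP' : IsSelfAdjoint P := ContinuousLinearMap.isSelfAdjoint_iff'.2 hP
  have hEnergy (t : ℝ) := hP'.hasDerivAt_re_inner_map_self_of_skewAdjoint_add_smul
    (skewAdjoint.mem_iff.2 hA) hPA B (hψ t)
  have hRate (t : ℝ) :
      HasDerivAt (fun t => 2 * C * ∫ s in (0:ℝ)..t, |u s|) (2 * C * |u t|) t :=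
    ((continuous_abs.comp hu).integral_hasStrictDerivAt 0 t).hasDerivAt.const_mul _
  have hle (t : ℝ) : 2 * u t * (inner ℂ (P (ψ t)) (B (ψ t)) : ℂ).re
      ≤ 2 * C * |u t| * (inner ℂ (P (ψ t)) (ψ t) : ℂ).re :=
    calc 2 * u t * (inner ℂ (P (ψ t)) (B (ψ t)) : ℂ).re
        ≤ 2 * |u t| * |(inner ℂ (P (ψ t)) (B (ψ t)) : ℂ).re| := by
          rw [mul_assoc, mul_assoc, ← abs_mul]
          exact mul_le_mul_of_nonneg_left (le_abs_self _) zero_le_two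
      _ ≤ 2 * C * |u t| * (inner ℂ (P (ψ t)) (ψ t) : ℂ).re := by
          nlinarith [hCbound (ψ t), abs_nonneg (u t)]
  simpa using le_exp_sub_mul_of_hasDerivAt_le_mul hEnergy hRate hle hT

/-- Abstract growth bound for weakly-coupled systems: if `P` is a bounded self-adjoint
nonnegative operator commuting with the skew-adjoint drift `A`, and
`|Re⟨Pψ, Bψ⟩| ≤ C·Re⟨Pψ, ψ⟩` for all `ψ`, then along any solution of
`ψ' = (A + u(t)B)ψ` one has
`Re⟨Pψ(T), ψ(T)⟩ ≤ exp(2C·∫₀^T |u|)·Re⟨Pψ(0), ψ(0)⟩` for all `T ≥ 0`. -/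
theorem weak_coupling_growth_bound
    {H : Type*} [NormedAddCommGroup H] [InnerProductSpace ℂ H] [CompleteSpace H]
    (A B P : H →L[ℂ] H) (hA : ContinuousLinearMap.adjoint A = -A)
    (hB : ContinuousLinearMap.adjoint B = -B)
    (hP : ContinuousLinearMap.adjoint P = P)
    (hPpos : ∀ ψ : H, 0 ≤ (inner ℂ (P ψ) ψ : ℂ).re)
    (hPA : P ∘L A = A ∘L P)
    (C : ℝ) (hC : 0 ≤ C)
    (hCbound : ∀ ψ : H, |(inner ℂ (P ψ) (B ψ) : ℂ).re| ≤ C * (inner ℂ (P ψ) ψ : ℂ).re)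
    (u : ℝ → ℝ) (hu : Continuous u) (ψ : ℝ → H)
    (hψ : ∀ t : ℝ, HasDerivAt ψ (A (ψ t) + u t • B (ψ t)) t) :
    ∀ T : ℝ, 0 ≤ T →
      (inner ℂ (P (ψ T)) (ψ T) : ℂ).re
        ≤ Real.exp (2 * C * ∫ s in (0:ℝ)..T, |u s|) * (inner ℂ (P (ψ 0)) (ψ 0) : ℂ).re :=
  weak_coupling_growth_bound_general A B P hA hP hPA C hCbound u hu ψ hψ
end

section
/- Let H be a complex Hilbert space, A, B : H → H bounded skew-adjoint operators, ψ₀ ∈ H with ‖ψ₀‖ = 1, and T ≥ 0 with T·(‖A‖ + ‖B‖) < 2. Let R_T be the set of all ψ(t) where 0 ≤ t ≤ T, u : ℝ → [0,1] is continuous, and ψ : ℝ → H is differentiable with ψ(0) = ψ₀ and ψ'(s) = A ψ(s) + u(s)·B ψ(s) for all s. Then −ψ₀ does not belong to the closure of R_T; in particular the closure of R_T is not the whole unit sphere of H. -/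
open ContinuousLinearMap Set Metric
open scoped InnerProductSpace

/-!
Since `A` and `B` are skew-adjoint, `A + u(t) B` is skew-adjoint for every real `u(t)`,
so trajectories stay on the unit sphere. On the sphere the velocity has norm at most
`‖A‖ + ‖B‖`, hence every state reachable within time `T` lies in the closed ball of radius
`T (‖A‖ + ‖B‖) < 2` around `ψ₀`, a closed set that misses `-ψ₀`, which is at distance `2`.
-/

lemma re_inner_apply_self_eq_zero_of_adjoint_eq_neg {𝕜 H : Type*} [RCLike 𝕜]
    [NormedAddCommGroup H] [InnerProductSpace 𝕜 H] [CompleteSpace H] {A : H →L[𝕜] H}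
    (hA : adjoint A = -A) (x : H) : RCLike.re ⟪x, A x⟫_𝕜 = 0 := by
  have h := adjoint_inner_left A x x
  rw [hA, neg_apply, inner_neg_left] at h
  have := congrArg RCLike.re h
  rw [map_neg, inner_re_symm] at this
  linarith

lemma norm_eq_norm_zero_of_re_inner_hasDerivAt_eq_zero {𝕜 E : Type*} [RCLike 𝕜]
    [NormedAddCommGroup E] [InnerProductSpace 𝕜 E] [NormedSpace ℝ E] {ψ v : ℝ → E}
    (hψ : ∀ s, HasDerivAt ψ (v s) s) (horth : ∀ s, RCLike.re ⟪ψ s, v s⟫_𝕜 = 0) (t : ℝ) :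
    ‖ψ t‖ = ‖ψ 0‖ := by
  have hderiv : ∀ s, HasDerivAt (fun r => RCLike.re ⟪ψ r, ψ r⟫_𝕜) 0 s := fun s => by
    have h := (RCLike.reCLM.hasFDerivAt.comp_hasDerivAt s ((hψ s).inner 𝕜 (hψ s)))
    rwa [Function.comp_def, RCLike.reCLM_apply, map_add, horth, inner_re_symm, horth,
      add_zero] at h
  have hsq : RCLike.re ⟪ψ t, ψ t⟫_𝕜 = RCLike.re ⟪ψ 0, ψ 0⟫_𝕜 :=
    is_const_of_deriv_eq_zero (fun s => (hderiv s).differentiableAt) (fun s => (hderiv s).deriv)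
      t 0
  rw [inner_self_eq_norm_sq, inner_self_eq_norm_sq] at hsq
  exact (pow_left_inj₀ (norm_nonneg _) (norm_nonneg _) two_ne_zero).1 hsq

lemma neg_notMem_closure_of_subset_closedBall {E : Type*} [SeminormedAddCommGroup E]
    [NormedSpace ℝ E] {R : Set E} {x : E} {r : ℝ} (hR : R ⊆ closedBall x r) (hr : r < 2 * ‖x‖) :
    -x ∉ closure R := by
  intro hx
  have hdist : dist (-x) x ≤ r := closure_minimal hR isClosed_closedBall hx
  rw [dist_eq_norm, ← neg_add', norm_neg, ← two_smul ℝ x, norm_smul, Real.norm_two] at hdist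
  linarith

section BilinearTrajectory

variable {H : Type*} [NormedAddCommGroup H] [InnerProductSpace ℂ H] [CompleteSpace H]
  {A B : H →L[ℂ] H} {u : ℝ → ℝ} {ψ : ℝ → H}

lemma norm_trajectory_eq (hA : adjoint A = -A) (hB : adjoint B = -B)
    (hψ : ∀ s, HasDerivAt ψ (A (ψ s) + u s • B (ψ s)) s) (t : ℝ) : ‖ψ t‖ = ‖ψ 0‖ := by
  refine norm_eq_norm_zero_of_re_inner_hasDerivAt_eq_zero (𝕜 := ℂ) hψ (fun s => ?_) t
  rw [inner_add_right, RCLike.real_smul_eq_coe_smul (K := ℂ), inner_smul_real_right, map_add,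
    RCLike.smul_re, re_inner_apply_self_eq_zero_of_adjoint_eq_neg hA,
    re_inner_apply_self_eq_zero_of_adjoint_eq_neg hB, mul_zero, add_zero]

lemma norm_trajectory_sub_le (hA : adjoint A = -A) (hB : adjoint B = -B)
    (hu : ∀ s, |u s| ≤ 1) (hψ : ∀ s, HasDerivAt ψ (A (ψ s) + u s • B (ψ s)) s)
    {t : ℝ} (ht : 0 ≤ t) : ‖ψ t - ψ 0‖ ≤ (‖A‖ + ‖B‖) * ‖ψ 0‖ * t := by
  have hspeed : ∀ s, ‖A (ψ s) + u s • B (ψ s)‖ ≤ (‖A‖ + ‖B‖) * ‖ψ 0‖ := fun s =>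
    calc ‖A (ψ s) + u s • B (ψ s)‖ ≤ ‖A‖ * ‖ψ s‖ + |u s| * (‖B‖ * ‖ψ s‖) := by
          refine (norm_add_le _ _).trans ?_
          rw [norm_smul, Real.norm_eq_abs]
          gcongr
          exacts [A.le_opNorm _, B.le_opNorm _]
      _ ≤ ‖A‖ * ‖ψ s‖ + 1 * (‖B‖ * ‖ψ s‖) := by gcongr; exact hu s
      _ = (‖A‖ + ‖B‖) * ‖ψ 0‖ := by rw [norm_trajectory_eq hA hB hψ s]; ring
  simpa using norm_image_sub_le_of_norm_deriv_le_segment' (fun s _ => (hψ s).hasDerivWithinAt)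
    (fun s _ => hspeed s) t ⟨ht, le_rfl⟩

end BilinearTrajectory

theorem minimal_time_positive_general
    {H : Type*} [NormedAddCommGroup H] [InnerProductSpace ℂ H] [CompleteSpace H]
    (A B : H →L[ℂ] H) (hA : ContinuousLinearMap.adjoint A = -A)
    (hB : ContinuousLinearMap.adjoint B = -B)
    (ψ₀ : H) (hψ₀ : ‖ψ₀‖ = 1) (T : ℝ)
    (hsmall : T * (‖A‖ + ‖B‖) < 2)
    (R : Set H)
    (hR : R = {x : H | ∃ t : ℝ, 0 ≤ t ∧ t ≤ T ∧ ∃ u : ℝ → ℝ,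
      Continuous u ∧ (∀ s : ℝ, u s ∈ Set.Icc (0:ℝ) 1) ∧ ∃ ψ : ℝ → H,
        ψ 0 = ψ₀ ∧ (∀ s : ℝ, HasDerivAt ψ (A (ψ s) + u s • B (ψ s)) s) ∧ ψ t = x}) :
    -ψ₀ ∉ closure R ∧ closure R ≠ Metric.sphere (0 : H) 1 := by
  have hball : R ⊆ closedBall ψ₀ (T * (‖A‖ + ‖B‖)) := by
    rw [hR]
    rintro _ ⟨t, ht0, htT, u, -, hu, ψ, rfl, hψ, rfl⟩
    have hu_abs : ∀ s, |u s| ≤ 1 := fun s => abs_le.2 ⟨by linarith [(hu s).1], (hu s).2⟩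
    rw [mem_closedBall, dist_eq_norm]
    calc ‖ψ t - ψ 0‖ ≤ (‖A‖ + ‖B‖) * ‖ψ 0‖ * t := norm_trajectory_sub_le hA hB hu_abs hψ ht0
      _ ≤ T * (‖A‖ + ‖B‖) := by rw [hψ₀]; nlinarith [norm_nonneg A, norm_nonneg B]
  have hnot : -ψ₀ ∉ closure R :=
    neg_notMem_closure_of_subset_closedBall hball (by rwa [hψ₀, mul_one])
  exact ⟨hnot, fun h => hnot (h ▸ by simpa using hψ₀)⟩

/-- Positive minimal time for bounded drift: if `T·(‖A‖ + ‖B‖) < 2`, then the antipode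
`−ψ₀` of the initial unit state is not in the closure of the set `R` of states reachable
within time `T` by solutions of `ψ' = (A + u(t)B)ψ` with continuous controls taking
values in `[0,1]`; in particular this closure is not the whole unit sphere. -/
theorem minimal_time_positive
    {H : Type*} [NormedAddCommGroup H] [InnerProductSpace ℂ H] [CompleteSpace H]
    (A B : H →L[ℂ] H) (hA : ContinuousLinearMap.adjoint A = -A)
    (hB : ContinuousLinearMap.adjoint B = -B)
    (ψ₀ : H) (hψ₀ : ‖ψ₀‖ = 1) (T : ℝ) (hT : 0 ≤ T)
    (hsmall : T * (‖A‖ + ‖B‖) < 2)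
    (R : Set H)
    (hR : R = {x : H | ∃ t : ℝ, 0 ≤ t ∧ t ≤ T ∧ ∃ u : ℝ → ℝ,
      Continuous u ∧ (∀ s : ℝ, u s ∈ Set.Icc (0:ℝ) 1) ∧ ∃ ψ : ℝ → H,
        ψ 0 = ψ₀ ∧ (∀ s : ℝ, HasDerivAt ψ (A (ψ s) + u s • B (ψ s)) s) ∧ ψ t = x}) :
    -ψ₀ ∉ closure R ∧ closure R ≠ Metric.sphere (0 : H) 1 :=
  minimal_time_positive_general A B hA hB ψ₀ hψ₀ T hsmall R hR
end
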